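/- arXiv:cs/0601090 — 7 statements merged into one kernel-verified Lean document; each statement's English description precedes it below -/
import Mathlib

section
/- Let G = (V' : V'', E) be a bipartite Δ-regular connected graph with parts of equal size n > 1, and let γ be the ratio of the second largest eigenvalue of the adjacency matrix of G to Δ. Let χ : V' ∪ V'' → [0,1] be any function, and set σ = (1/n) Σ_{u ∈ V'} χ(u) and τ = (1/n) Σ_{v ∈ V''} χ(v). Then (1/(Δn)) Σ_{u ∈ V'} Σ_{v ∈ N(u)} χ(u)χ(v) ≤ στ + γ·√(σ(1−σ)τ(1−τ)) ≤ (1−γ)στ + γ·√(στ), where N(u) denotes the set of neighbors of u in G. -/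
/-!
Write the adjacency matrix as the block matrix `[[0, B], [Bᵀ, 0]]` and let `f`, `g` be `χ` on the
two sides, so that the sum is `f ⬝ᵥ B *ᵥ g`. Since `B` and `Bᵀ` have all row sums `Δ`, centring
`f` and `g` at their means `σ`, `τ` splits it as `στΔn + f' ⬝ᵥ B *ᵥ g'`. The vector
`(‖g'‖ f', ‖f'‖ g')` is orthogonal to the all-one vector and its quadratic form is
`2‖f'‖‖g'‖ (f' ⬝ᵥ B *ᵥ g')`, so the Rayleigh bound gives `f' ⬝ᵥ B *ᵥ g' ≤ γΔ ‖f'‖‖g'‖`; and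
`‖f'‖² ≤ nσ(1 - σ)` because `χ² ≤ χ`. The second inequality reduces to
`√(στ) + √((1 - σ)(1 - τ)) ≤ 1`, which is AM–GM twice.
-/

open Matrix

namespace Matrix

variable {ι α β : Type*} [Fintype ι] [Fintype α] [Fintype β]

theorem dotProduct_self_nonneg (x : ι → ℝ) : 0 ≤ x ⬝ᵥ x :=
  Finset.sum_nonneg fun i _ => mul_self_nonneg (x i)

theorem dotProduct_self_pos {x : ι → ℝ} (hx : x ≠ 0) : 0 < x ⬝ᵥ x :=
  (dotProduct_self_nonneg x).lt_of_ne (Ne.symm (dotProduct_self_eq_zero.not.mpr hx))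

def rayleighQuotients (A : Matrix ι ι ℝ) : Set ℝ :=
  {ρ | ∃ x : ι → ℝ, x ≠ 0 ∧ (x ⬝ᵥ (fun _ => 1)) = 0 ∧ x ⬝ᵥ (A *ᵥ x) = ρ * (x ⬝ᵥ x)}

theorem dotProduct_mulVec_self_le_of_mem_upperBounds {A : Matrix ι ι ℝ} {μ : ℝ}
    (h : μ ∈ upperBounds A.rayleighQuotients) {x : ι → ℝ} (hx : ∑ i, x i = 0) :
    x ⬝ᵥ (A *ᵥ x) ≤ μ * (x ⬝ᵥ x) := by
  rcases eq_or_ne x 0 with rfl | hx0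
  · simp
  have hpos := dotProduct_self_pos hx0
  have hmem := h ⟨x, hx0, (dotProduct_one x).trans hx, (div_mul_cancel₀ _ hpos.ne').symm⟩
  exact (div_le_iff₀ hpos).mp hmem

theorem sumElim_dotProduct_fromBlocks_mulVec {R : Type*} [CommRing R] (B : Matrix α β R)
    (p : α → R) (q : β → R) :
    Sum.elim p q ⬝ᵥ (fromBlocks 0 B Bᵀ 0 *ᵥ Sum.elim p q) = 2 * (p ⬝ᵥ (B *ᵥ q)) := by
  simp [fromBlocks_mulVec, sumElim_dotProduct_sumElim, mulVec_transpose, dotProduct_mulVec,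
    dotProduct_comm q]
  ring

theorem nonneg_of_mem_upperBounds_rayleighQuotients_fromBlocks [Nontrivial α]
    (B : Matrix α β ℝ) {μ : ℝ} (h : μ ∈ upperBounds (fromBlocks 0 B Bᵀ 0).rayleighQuotients) :
    0 ≤ μ := by
  classical
  obtain ⟨i, j, hij⟩ := exists_pair_ne α
  set p : α → ℝ := Pi.single i 1 - Pi.single j 1
  have hp : p ≠ 0 := fun h0 => by simpa [p, hij] using congrFun h0 i
  refine h ⟨Sum.elim p 0, ?_, ?_, ?_⟩
  · simpa [funext_iff, Sum.forall] using hp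
  · exact (dotProduct_one _).trans (by simp [Fintype.sum_sum_type, p])
  · simp [sumElim_dotProduct_fromBlocks_mulVec]

theorem dotProduct_mulVec_le_of_mem_upperBounds (B : Matrix α β ℝ) {μ : ℝ}
    (h : μ ∈ upperBounds (fromBlocks 0 B Bᵀ 0).rayleighQuotients) {p : α → ℝ} {q : β → ℝ}
    (hp : ∑ i, p i = 0) (hq : ∑ j, q j = 0) :
    p ⬝ᵥ (B *ᵥ q) ≤ μ * (√(p ⬝ᵥ p) * √(q ⬝ᵥ q)) := by
  have key : ∀ s t : ℝ,
      2 * (s * t) * (p ⬝ᵥ (B *ᵥ q)) ≤ μ * (s ^ 2 * (p ⬝ᵥ p) + t ^ 2 * (q ⬝ᵥ q)) := by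
    intro s t
    have hst : ∑ k, Sum.elim (s • p) (t • q) k = 0 := by
      simp [Fintype.sum_sum_type, ← Finset.mul_sum, hp, hq]
    have := dotProduct_mulVec_self_le_of_mem_upperBounds h hst
    rw [sumElim_dotProduct_fromBlocks_mulVec, sumElim_dotProduct_sumElim] at this
    simp only [mulVec_smul, dotProduct_smul, smul_dotProduct, smul_eq_mul] at this
    linear_combination this
  rcases eq_or_ne p 0 with rfl | hp0
  · simp
  rcases eq_or_ne q 0 with rfl | hq0
  · simp
  set a := √(p ⬝ᵥ p)
  set b := √(q ⬝ᵥ q)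
  have ha : 0 < a := Real.sqrt_pos.mpr (dotProduct_self_pos hp0)
  have hb : 0 < b := Real.sqrt_pos.mpr (dotProduct_self_pos hq0)
  have hkey := key b a
  rw [← Real.sq_sqrt (dotProduct_self_nonneg p), ← Real.sq_sqrt (dotProduct_self_nonneg q)]
    at hkey
  refine le_of_mul_le_mul_left ?_ (by positivity : 0 < 2 * (b * a))
  linear_combination hkey

theorem mulVec_one_of_fromBlocks_mulVec_one {R : Type*} [NonUnitalNonAssocSemiring R] [One R]
    {B : Matrix α β R} {Δ : R}
    (h : fromBlocks 0 B Bᵀ 0 *ᵥ 1 = Δ • 1) : B *ᵥ 1 = Δ • 1 ∧ Bᵀ *ᵥ 1 = Δ • 1 := by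
  rw [fromBlocks_mulVec] at h
  constructor <;> ext i
  · simpa using congrFun h (.inl i)
  · simpa using congrFun h (.inr i)

theorem dotProduct_mulVec_eq_add_centered (B : Matrix α β ℝ) {Δ : ℝ} (hrow : B *ᵥ 1 = Δ • 1)
    (hcol : Bᵀ *ᵥ 1 = Δ • 1) {n : ℕ} (hα : Fintype.card α = n) {f : α → ℝ} {g : β → ℝ}
    {σ τ : ℝ} (hf : ∑ i, f i = n * σ) (hg : ∑ j, g j = n * τ) :
    f ⬝ᵥ (B *ᵥ g) = σ * τ * (Δ * n) + (f - σ • 1) ⬝ᵥ (B *ᵥ (g - τ • 1)) := by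
  have hfB : f ⬝ᵥ (B *ᵥ 1) = Δ * (n * σ) := by
    rw [hrow, dotProduct_smul, dotProduct_one, hf, smul_eq_mul]
  have hBg : 1 ⬝ᵥ (B *ᵥ g) = Δ * (n * τ) := by
    rw [dotProduct_mulVec, ← mulVec_transpose, hcol, smul_dotProduct, one_dotProduct, hg,
      smul_eq_mul]
  have hB1 : (1 : α → ℝ) ⬝ᵥ (B *ᵥ 1) = Δ * n := by
    simp [hrow, hα]
  simp only [mulVec_sub, mulVec_smul, sub_dotProduct, dotProduct_sub, smul_dotProduct,
    dotProduct_smul, smul_eq_mul, hfB, hBg, hB1]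
  ring

theorem sub_smul_one_dotProduct_self_le {f : α → ℝ} (hf01 : ∀ i, f i ∈ Set.Icc 0 1) {n : ℕ}
    (hα : Fintype.card α = n) {σ : ℝ} (hf : ∑ i, f i = n * σ) :
    (f - σ • 1) ⬝ᵥ (f - σ • 1) ≤ n * (σ * (1 - σ)) := by
  have hsq : f ⬝ᵥ f ≤ ∑ i, f i :=
    Finset.sum_le_sum fun i _ => mul_le_of_le_one_left (hf01 i).1 (hf01 i).2
  have hexp : (f - σ • 1) ⬝ᵥ (f - σ • 1) = f ⬝ᵥ f - 2 * σ * ∑ i, f i + n * σ ^ 2 := by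
    simp only [sub_dotProduct, dotProduct_sub, smul_dotProduct, dotProduct_smul, smul_eq_mul,
      dotProduct_one, dotProduct_comm 1 f]
    simp [hα]
    ring
  rw [hexp, hf]
  nlinarith

theorem sub_smul_one_dotProduct_mulVec_le (B : Matrix α β ℝ) {μ : ℝ}
    (h : μ ∈ upperBounds (fromBlocks 0 B Bᵀ 0).rayleighQuotients) (hμ : 0 ≤ μ) {n : ℕ}
    (hα : Fintype.card α = n) (hβ : Fintype.card β = n) {f : α → ℝ} {g : β → ℝ}
    (hf01 : ∀ i, f i ∈ Set.Icc 0 1) (hg01 : ∀ j, g j ∈ Set.Icc 0 1) {σ τ : ℝ}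
    (hf : ∑ i, f i = n * σ) (hg : ∑ j, g j = n * τ) :
    (f - σ • 1) ⬝ᵥ (B *ᵥ (g - τ • 1)) ≤ μ * (n * √(σ * (1 - σ) * τ * (1 - τ))) := by
  have hvf := sub_smul_one_dotProduct_self_le hf01 hα hf
  have hvg := sub_smul_one_dotProduct_self_le hg01 hβ hg
  refine (dotProduct_mulVec_le_of_mem_upperBounds B h (by simp [Finset.sum_sub_distrib, hα, hf])
    (by simp [Finset.sum_sub_distrib, hβ, hg])).trans (mul_le_mul_of_nonneg_left ?_ hμ)
  calc _ ≤ √(n * (σ * (1 - σ))) * √(n * (τ * (1 - τ))) := by gcongr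
    _ = √((n : ℝ) ^ 2 * (σ * (1 - σ) * τ * (1 - τ))) := by
      rw [← Real.sqrt_mul ((dotProduct_self_nonneg _).trans hvf)]
      ring_nf
    _ = n * √(σ * (1 - σ) * τ * (1 - τ)) := by
      rw [Real.sqrt_mul (sq_nonneg _), Real.sqrt_sq n.cast_nonneg]

end Matrix

theorem mean_mem_Icc {α : Type*} [Fintype α] {f : α → ℝ} (hf01 : ∀ i, f i ∈ Set.Icc 0 1)
    {n : ℕ} (hα : Fintype.card α = n) (hn : 0 < n) {σ : ℝ} (hf : ∑ i, f i = n * σ) :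
    σ ∈ Set.Icc 0 1 := by
  have h0 : 0 ≤ ∑ i, f i := Finset.sum_nonneg fun i _ => (hf01 i).1
  have h1 : ∑ i, f i ≤ n := by
    simpa [hα] using Finset.sum_le_sum fun i (_ : i ∈ Finset.univ) => (hf01 i).2
  have hn' : (0 : ℝ) < n := by exact_mod_cast hn
  constructor <;> nlinarith

theorem mul_add_mul_sqrt_le_mul_add_mul_sqrt {σ τ γ : ℝ} (hσ : σ ∈ Set.Icc 0 1)
    (hτ : τ ∈ Set.Icc 0 1) (hγ : 0 ≤ γ) :
    σ * τ + γ * √(σ * (1 - σ) * τ * (1 - τ)) ≤ (1 - γ) * σ * τ + γ * √(σ * τ) := by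
  obtain ⟨hσ0, hσ1⟩ := hσ
  obtain ⟨hτ0, hτ1⟩ := hτ
  set p := √(σ * τ)
  set q := √((1 - σ) * (1 - τ))
  have hp : p ^ 2 = σ * τ := Real.sq_sqrt (by positivity)
  have hsplit : √(σ * (1 - σ) * τ * (1 - τ)) = p * q := by
    rw [← Real.sqrt_mul (by positivity)]; ring_nf
  have hp_le : p ≤ (σ + τ) / 2 :=
    Real.sqrt_le_iff.mpr ⟨by linarith, by nlinarith [sq_nonneg (σ - τ)]⟩
  have hq_le : q ≤ ((1 - σ) + (1 - τ)) / 2 :=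
    Real.sqrt_le_iff.mpr ⟨by linarith, by nlinarith [sq_nonneg (σ - τ)]⟩
  rw [hsplit]
  nlinarith [mul_le_mul_of_nonneg_left (by linarith : p + q ≤ 1)
    (mul_nonneg hγ (Real.sqrt_nonneg (σ * τ)))]

namespace SimpleGraph

theorem adjMatrix_eq_fromBlocks {α β R : Type*} [Zero R] [One R] (G : SimpleGraph (α ⊕ β))
    [DecidableRel G.Adj]
    (hα : ∀ a b, ¬ G.Adj (.inl a) (.inl b)) (hβ : ∀ a b, ¬ G.Adj (.inr a) (.inr b)) :
    G.adjMatrix R = fromBlocks 0 (G.adjMatrix R).toBlocks₁₂ (G.adjMatrix R).toBlocks₁₂ᵀ 0 := by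
  ext (i | i) (j | j) <;> simp [toBlocks₁₂, hα, hβ, G.adj_comm]

theorem adjMatrix_mulVec_one_of_regular {V R : Type*} [Fintype V] [NonAssocSemiring R]
    (G : SimpleGraph V) [DecidableRel G.Adj] {Δ : ℕ} (hreg : G.IsRegularOfDegree Δ) :
    G.adjMatrix R *ᵥ 1 = (Δ : R) • 1 := by
  ext v
  simp [hreg v]

end SimpleGraph

/-- `γ * Δ`, the second largest eigenvalue, is characterized (Courant–Fischer, the all-one vector
being a top eigenvector of a regular graph) as the greatest Rayleigh quotient over nonzero vectors
orthogonal to the all-one vector. -/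
theorem stmt_0_general (n Δ : ℕ) (hn : 1 < n) (hΔ : 0 < Δ)
    (G : SimpleGraph (Fin n ⊕ Fin n)) [DecidableRel G.Adj]
    (hbipL : ∀ a b : Fin n, ¬ G.Adj (Sum.inl a) (Sum.inl b))
    (hbipR : ∀ a b : Fin n, ¬ G.Adj (Sum.inr a) (Sum.inr b))
    (hreg : ∀ v, G.degree v = Δ)
    (γ : ℝ)
    (hγ : IsGreatest {ρ : ℝ | ∃ x : (Fin n ⊕ Fin n) → ℝ, x ≠ 0 ∧
        (x ⬝ᵥ (fun _ => 1)) = 0 ∧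
        x ⬝ᵥ ((G.adjMatrix ℝ).mulVec x) = ρ * (x ⬝ᵥ x)} (γ * Δ))
    (χ : (Fin n ⊕ Fin n) → ℝ)
    (hχ : ∀ v, χ v ∈ Set.Icc (0 : ℝ) 1)
    (σ τ : ℝ)
    (hσ : σ = (1 / (n : ℝ)) * ∑ u : Fin n, χ (Sum.inl u))
    (hτ : τ = (1 / (n : ℝ)) * ∑ v : Fin n, χ (Sum.inr v)) :
    (1 / ((Δ : ℝ) * n)) *
        ∑ u : Fin n, ∑ v ∈ G.neighborFinset (Sum.inl u), χ (Sum.inl u) * χ v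
      ≤ σ * τ + γ * Real.sqrt (σ * (1 - σ) * τ * (1 - τ)) ∧
    σ * τ + γ * Real.sqrt (σ * (1 - σ) * τ * (1 - τ))
      ≤ (1 - γ) * σ * τ + γ * Real.sqrt (σ * τ) := by
  set B := (G.adjMatrix ℝ).toBlocks₁₂
  have hA : G.adjMatrix ℝ = fromBlocks 0 B Bᵀ 0 := G.adjMatrix_eq_fromBlocks hbipL hbipR
  have hγΔ : γ * Δ ∈ upperBounds (fromBlocks 0 B Bᵀ 0).rayleighQuotients := hA ▸ hγ.2
  have : Nontrivial (Fin n) := Fin.nontrivial_iff_two_le.mpr hn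
  have hΔ' : (0 : ℝ) < Δ := by exact_mod_cast hΔ
  have hγ0 : 0 ≤ γ := nonneg_of_mul_nonneg_left
    (nonneg_of_mem_upperBounds_rayleighQuotients_fromBlocks B hγΔ) hΔ'
  obtain ⟨hrow, hcol⟩ :=
    mulVec_one_of_fromBlocks_mulVec_one (hA ▸ G.adjMatrix_mulVec_one_of_regular hreg)
  set f : Fin n → ℝ := fun u => χ (.inl u)
  set g : Fin n → ℝ := fun v => χ (.inr v)
  have hS : ∑ u, ∑ v ∈ G.neighborFinset (.inl u), χ (.inl u) * χ v = f ⬝ᵥ (B *ᵥ g) := by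
    simp_rw [← Finset.mul_sum, ← G.adjMatrix_mulVec_apply, hA, fromBlocks_mulVec]
    simp [dotProduct, f, g, Function.comp_def]
  have hn' : (0 : ℝ) < n := by positivity
  have hf : ∑ u, f u = n * σ := by rw [hσ]; field_simp
  have hg : ∑ v, g v = n * τ := by rw [hτ]; field_simp
  have hf01 : ∀ u, f u ∈ Set.Icc 0 1 := fun u => hχ _
  have hg01 : ∀ v, g v ∈ Set.Icc 0 1 := fun v => hχ _
  have hσ01 := mean_mem_Icc hf01 (Fintype.card_fin n) (by omega) hf
  have hτ01 := mean_mem_Icc hg01 (Fintype.card_fin n) (by omega) hg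
  refine ⟨?_, mul_add_mul_sqrt_le_mul_add_mul_sqrt hσ01 hτ01 hγ0⟩
  rw [hS, dotProduct_mulVec_eq_add_centered B hrow hcol (Fintype.card_fin n) hf hg]
  calc _ ≤ 1 / (Δ * n) * (σ * τ * (Δ * n) + γ * Δ * (n * √(σ * (1 - σ) * τ * (1 - τ)))) := by
        gcongr
        exact sub_smul_one_dotProduct_mulVec_le B hγΔ (by positivity) (Fintype.card_fin n)
          (Fintype.card_fin n) hf01 hg01 hf hg
    _ = σ * τ + γ * √(σ * (1 - σ) * τ * (1 - τ)) := by
        field_simp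

/-- Lemma on bipartite expander mixing with [0,1]-valued vertex functions.
`G` is a bipartite `Δ`-regular connected graph on parts `V' = Fin n` (embedded via `Sum.inl`)
and `V'' = Fin n` (via `Sum.inr`), with `n > 1`; `γ * Δ` is the second largest eigenvalue of
the adjacency matrix of `G`, characterized (Courant–Fischer, using that the all-one vector is a
top eigenvector of the adjacency matrix of a regular graph) as the greatest Rayleigh quotient
over nonzero vectors orthogonal to the all-one vector. -/
theorem stmt_0 (n Δ : ℕ) (hn : 1 < n) (hΔ : 0 < Δ)
    (G : SimpleGraph (Fin n ⊕ Fin n)) [DecidableRel G.Adj]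
    (hbipL : ∀ a b : Fin n, ¬ G.Adj (Sum.inl a) (Sum.inl b))
    (hbipR : ∀ a b : Fin n, ¬ G.Adj (Sum.inr a) (Sum.inr b))
    (hreg : ∀ v, G.degree v = Δ)
    (hconn : G.Connected)
    (γ : ℝ)
    (hγ : IsGreatest {ρ : ℝ | ∃ x : (Fin n ⊕ Fin n) → ℝ, x ≠ 0 ∧
        (x ⬝ᵥ (fun _ => 1)) = 0 ∧
        x ⬝ᵥ ((G.adjMatrix ℝ).mulVec x) = ρ * (x ⬝ᵥ x)} (γ * Δ))
    (χ : (Fin n ⊕ Fin n) → ℝ)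
    (hχ : ∀ v, χ v ∈ Set.Icc (0 : ℝ) 1)
    (σ τ : ℝ)
    (hσ : σ = (1 / (n : ℝ)) * ∑ u : Fin n, χ (Sum.inl u))
    (hτ : τ = (1 / (n : ℝ)) * ∑ v : Fin n, χ (Sum.inr v)) :
    (1 / ((Δ : ℝ) * n)) *
        ∑ u : Fin n, ∑ v ∈ G.neighborFinset (Sum.inl u), χ (Sum.inl u) * χ v
      ≤ σ * τ + γ * Real.sqrt (σ * (1 - σ) * τ * (1 - τ)) ∧
    σ * τ + γ * Real.sqrt (σ * (1 - σ) * τ * (1 - τ))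
      ≤ (1 - γ) * σ * τ + γ * Real.sqrt (σ * τ) :=
  stmt_0_general n Δ hn hΔ G hbipL hbipR hreg γ hγ χ hχ σ τ hσ hτ
end

section
/- Let G = (V' : V'', E) be a bipartite Δ-regular connected graph with parts of equal size n > 1, and let γ be the ratio of the second largest eigenvalue of the adjacency matrix of G to Δ. Let S ⊆ V' and T ⊆ V'' be subsets of sizes |S| = σn and |T| = τn with σ + τ > 0. Then the sum of the degrees of the vertices in the subgraph G_{S∪T} of G induced by S ∪ T satisfies Σ_{u ∈ S∪T} deg_{S∪T}(u) ≤ 2((1−γ)στ + γ√(στ))·Δn. -/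
open Matrix Finset

/-!
Let `B` be the biadjacency matrix and `p = 1_S - σ 1`, `q = 1_T - τ 1` the centred indicator
vectors. Then `Σ deg_{S∪T} = 2 ⟨1_S, B 1_T⟩`, and since every row and column of `B` sums to `Δ`,
`⟨1_S, B 1_T⟩ = στΔn + ⟨p, B q⟩`. For every real `t` the vector `(t p, q)` is orthogonal to the
all-one vector, so comparing its Rayleigh quotient with `γΔ` gives
`2t ⟨p, B q⟩ ≤ γΔ (t² ‖p‖² + ‖q‖²)`. This quadratic in `t` is nonnegative, so its discriminant
yields `⟨p, B q⟩ ≤ γΔ ‖p‖ ‖q‖ = γΔ n √(σ(1-σ)τ(1-τ))` (here `γΔ ≥ 0` because vectors supported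
on `V'` have Rayleigh quotient `0`), and `√(σ(1-σ)τ(1-τ)) ≤ √(στ) - στ` by AM-GM.
-/

theorem le_mul_sqrt_of_forall_two_mul_le {D c a b : ℝ} (hc : 0 ≤ c)
    (h : ∀ t : ℝ, 2 * t * D ≤ c * (t ^ 2 * a + b)) : D ≤ c * √(a * b) := by
  have hdisc : discrim (c * a) (-(2 * D)) (c * b) ≤ 0 :=
    discrim_le_zero fun t => by nlinarith [h t]
  have hsq : D ^ 2 ≤ c ^ 2 * (a * b) := by rw [discrim] at hdisc; nlinarith
  calc D ≤ |D| := le_abs_self D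
    _ ≤ √(c ^ 2 * (a * b)) := Real.abs_le_sqrt hsq
    _ = c * √(a * b) := by rw [Real.sqrt_mul (sq_nonneg c), Real.sqrt_sq hc]

theorem sqrt_mul_one_sub_mul_le {σ τ : ℝ} (hσ₀ : 0 ≤ σ) (hσ₁ : σ ≤ 1) (hτ₀ : 0 ≤ τ)
    (hτ₁ : τ ≤ 1) : √(σ * (1 - σ) * (τ * (1 - τ))) ≤ √(σ * τ) - σ * τ := by
  set s := √(σ * τ)
  have hs₀ : 0 ≤ s := Real.sqrt_nonneg _
  have hs₂ : s ^ 2 = σ * τ := Real.sq_sqrt (mul_nonneg hσ₀ hτ₀)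
  have hs₁ : s ≤ 1 := by nlinarith [mul_le_one₀ hσ₁ hτ₀ hτ₁]
  have amgm : 2 * s ≤ σ + τ := by nlinarith [sq_nonneg (σ - τ)]
  rw [Real.sqrt_le_left (by nlinarith)]
  nlinarith

theorem Finset.mem_Icc_of_card_eq_mul_card {ι : Type*} [Fintype ι] [Nonempty ι] (S : Finset ι)
    {σ : ℝ} (hS : (#S : ℝ) = σ * Fintype.card ι) : σ ∈ Set.Icc 0 1 := by
  have hcard : (0 : ℝ) < Fintype.card ι := by exact_mod_cast Fintype.card_pos
  have hle : (#S : ℝ) ≤ Fintype.card ι := by exact_mod_cast S.card_le_univ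
  constructor <;> nlinarith [(#S).cast_nonneg (α := ℝ)]

namespace Finset

variable {ι : Type*} [DecidableEq ι]

def indicatorVec (S : Finset ι) : ι → ℝ := fun i => if i ∈ S then 1 else 0

theorem indicatorVec_image_inl_union_image_inr {κ : Type*} [DecidableEq κ] (S : Finset ι)
    (T : Finset κ) :
    (S.image Sum.inl ∪ T.image Sum.inr).indicatorVec = Sum.elim S.indicatorVec T.indicatorVec := by
  ext (a | b) <;> simp [indicatorVec]

variable [Fintype ι] (S : Finset ι) {σ : ℝ}

theorem sum_indicatorVec : ∑ i, S.indicatorVec i = #S := by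
  simp [indicatorVec]

theorem indicatorVec_sub_smul_one_dotProduct_one (hS : (#S : ℝ) = σ * Fintype.card ι) :
    (S.indicatorVec - σ • 1) ⬝ᵥ 1 = 0 := by
  simp [dotProduct_one, sum_sub_distrib, sum_indicatorVec, hS, mul_comm]

theorem indicatorVec_sub_smul_one_dotProduct_self (hS : (#S : ℝ) = σ * Fintype.card ι) :
    (S.indicatorVec - σ • 1) ⬝ᵥ (S.indicatorVec - σ • 1) = σ * (1 - σ) * Fintype.card ι := by
  have hidem : S.indicatorVec ⬝ᵥ S.indicatorVec = #S := by
    simp [dotProduct, indicatorVec]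
  rw [dotProduct_sub, dotProduct_smul, indicatorVec_sub_smul_one_dotProduct_one S hS, smul_zero,
    sub_zero, sub_dotProduct, hidem, smul_dotProduct, one_dotProduct, sum_indicatorVec, hS,
    smul_eq_mul]
  ring

end Finset

theorem Matrix.sub_smul_one_dotProduct_mulVec_sub_smul_one {ι R : Type*} [Fintype ι] [CommRing R]
    {M : Matrix ι ι R} {d : R} (hrow : M *ᵥ 1 = d • 1) (hcol : 1 ᵥ* M = d • 1) {p q : ι → R}
    {s t : R} (hp : (p - s • 1) ⬝ᵥ 1 = 0) (hq : (q - t • 1) ⬝ᵥ 1 = 0) :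
    (p - s • 1) ⬝ᵥ M *ᵥ (q - t • 1) = p ⬝ᵥ M *ᵥ q - s * t * d * Fintype.card ι := by
  have hq1 : 1 ⬝ᵥ q = t * Fintype.card ι := by
    rw [sub_dotProduct, sub_eq_zero, smul_dotProduct] at hq
    rw [dotProduct_comm, hq]
    simp
  rw [mulVec_sub, mulVec_smul, hrow, dotProduct_sub, dotProduct_smul, dotProduct_smul, hp,
    smul_zero, smul_zero, sub_zero, sub_dotProduct, smul_dotProduct, dotProduct_mulVec 1, hcol,
    smul_dotProduct, hq1, smul_eq_mul, smul_eq_mul]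
  ring

theorem Matrix.sumElim_dotProduct_fromBlocks_zero_mulVec {α β R : Type*} [Fintype α] [Fintype β]
    [CommRing R] (B : Matrix α β R) (f : α → R) (g : β → R) :
    Sum.elim f g ⬝ᵥ fromBlocks 0 B Bᵀ 0 *ᵥ Sum.elim f g = 2 * (f ⬝ᵥ B *ᵥ g) := by
  simp only [fromBlocks_mulVec, Sum.elim_comp_inl, Sum.elim_comp_inr, zero_mulVec, zero_add,
    add_zero, sumElim_dotProduct_sumElim]
  rw [mulVec_transpose, dotProduct_comm g, ← dotProduct_mulVec, two_mul]

/-- By Courant–Fischer, for symmetric `A` with eigenvector `1` the greatest element of this set is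
the second largest eigenvalue of `A`. -/
def rayleighQuotientsOrthOnes {V : Type*} [Fintype V] (A : Matrix V V ℝ) : Set ℝ :=
  {ρ | ∃ x : V → ℝ, x ≠ 0 ∧ x ⬝ᵥ 1 = 0 ∧ x ⬝ᵥ A *ᵥ x = ρ * (x ⬝ᵥ x)}

theorem dotProduct_mulVec_le_of_mem_upperBounds {V : Type*} [Fintype V] {A : Matrix V V ℝ}
    {c : ℝ} (hc : c ∈ upperBounds (rayleighQuotientsOrthOnes A)) {y : V → ℝ}
    (hy : y ⬝ᵥ 1 = 0) : y ⬝ᵥ A *ᵥ y ≤ c * (y ⬝ᵥ y) := by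
  rcases eq_or_ne y 0 with rfl | hy₀
  · simp
  have hpos : 0 < y ⬝ᵥ y := (Fintype.sum_nonneg fun i => mul_self_nonneg (y i)).lt_of_ne'
    (dotProduct_self_eq_zero.not.2 hy₀)
  have hmem : y ⬝ᵥ A *ᵥ y / (y ⬝ᵥ y) ∈ rayleighQuotientsOrthOnes A :=
    ⟨y, hy₀, hy, (div_mul_cancel₀ _ hpos.ne').symm⟩
  exact (div_le_iff₀ hpos).1 (hc hmem)

namespace SimpleGraph

theorem sum_card_filter_adj_eq_indicatorVec_dotProduct {V : Type*} [Fintype V] [DecidableEq V]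
    (G : SimpleGraph V) [DecidableRel G.Adj] (U : Finset V) :
    ∑ w ∈ U, (#{v ∈ U | G.Adj w v} : ℝ) = U.indicatorVec ⬝ᵥ G.adjMatrix ℝ *ᵥ U.indicatorVec := by
  simp [indicatorVec, dotProduct, neighborFinset_eq_filter, inter_comm, inter_filter]

variable {α β : Type*} {G : SimpleGraph (α ⊕ β)} [DecidableRel G.Adj]

theorem adjMatrix_eq_fromBlocks_of_bipartite {R : Type*} [Zero R] [One R]
    (hL : ∀ a a', ¬ G.Adj (.inl a) (.inl a')) (hR : ∀ b b', ¬ G.Adj (.inr b) (.inr b')) :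
    G.adjMatrix R = fromBlocks 0 (G.adjMatrix R).toBlocks₁₂ (G.adjMatrix R).toBlocks₁₂ᵀ 0 := by
  ext (a | b) (a' | b') <;> simp [hL, hR, toBlocks₁₂, adjMatrix_apply, G.adj_comm (.inr _)]

variable [Fintype α] [Fintype β]

theorem sumElim_dotProduct_adjMatrix_mulVec_of_bipartite {R : Type*} [CommRing R]
    (hL : ∀ a a', ¬ G.Adj (.inl a) (.inl a')) (hR : ∀ b b', ¬ G.Adj (.inr b) (.inr b'))
    (f : α → R) (g : β → R) :
    Sum.elim f g ⬝ᵥ G.adjMatrix R *ᵥ Sum.elim f g = 2 * (f ⬝ᵥ (G.adjMatrix R).toBlocks₁₂ *ᵥ g) := by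
  conv_lhs => rw [adjMatrix_eq_fromBlocks_of_bipartite hL hR]
  exact sumElim_dotProduct_fromBlocks_zero_mulVec _ f g

theorem toBlocks₁₂_mulVec_one_of_bipartite {R : Type*} [CommRing R] {d : ℕ}
    (hL : ∀ a a', ¬ G.Adj (.inl a) (.inl a')) (hR : ∀ b b', ¬ G.Adj (.inr b) (.inr b'))
    (hreg : G.IsRegularOfDegree d) :
    (G.adjMatrix R).toBlocks₁₂ *ᵥ 1 = (d : R) • 1 ∧
      1 ᵥ* (G.adjMatrix R).toBlocks₁₂ = (d : R) • 1 := by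
  have h v := G.adjMatrix_mulVec_const_apply_of_regular (α := R) (a := 1) (v := v) hreg
  rw [adjMatrix_eq_fromBlocks_of_bipartite hL hR] at h
  constructor
  · ext a; simpa [fromBlocks_mulVec] using h (.inl a)
  · ext b; simpa [fromBlocks_mulVec, mulVec_transpose] using h (.inr b)

theorem nonneg_of_mem_upperBounds_of_bipartite [Nontrivial α] [DecidableEq α]
    (hL : ∀ a a', ¬ G.Adj (.inl a) (.inl a')) (hR : ∀ b b', ¬ G.Adj (.inr b) (.inr b')) {c : ℝ}
    (hc : c ∈ upperBounds (rayleighQuotientsOrthOnes (G.adjMatrix ℝ))) : 0 ≤ c := by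
  obtain ⟨a, a', haa'⟩ := exists_pair_ne α
  refine hc ⟨Sum.elim (Pi.single a 1 - Pi.single a' 1) 0, ?_, ?_, ?_⟩
  · intro h; simpa [haa'] using congrFun h (Sum.inl a)
  · simp [dotProduct, Fintype.sum_sum_type, sum_sub_distrib]
  · simp [sumElim_dotProduct_adjMatrix_mulVec_of_bipartite hL hR]

theorem dotProduct_toBlocks₁₂_mulVec_le_of_bipartite
    (hL : ∀ a a', ¬ G.Adj (.inl a) (.inl a')) (hR : ∀ b b', ¬ G.Adj (.inr b) (.inr b')) {c : ℝ}
    (hc₀ : 0 ≤ c) (hc : c ∈ upperBounds (rayleighQuotientsOrthOnes (G.adjMatrix ℝ)))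
    {p : α → ℝ} {q : β → ℝ} (hp : p ⬝ᵥ 1 = 0) (hq : q ⬝ᵥ 1 = 0) :
    p ⬝ᵥ (G.adjMatrix ℝ).toBlocks₁₂ *ᵥ q ≤ c * √((p ⬝ᵥ p) * (q ⬝ᵥ q)) := by
  refine le_mul_sqrt_of_forall_two_mul_le hc₀ fun t => ?_
  have hy : Sum.elim (t • p) q ⬝ᵥ 1 = 0 := by
    rw [← Sum.elim_one_one, sumElim_dotProduct_sumElim, smul_dotProduct, hp, hq, smul_zero,
      add_zero]
  have h := dotProduct_mulVec_le_of_mem_upperBounds hc hy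
  rw [sumElim_dotProduct_adjMatrix_mulVec_of_bipartite hL hR, sumElim_dotProduct_sumElim,
    smul_dotProduct, smul_dotProduct, dotProduct_smul, smul_eq_mul, smul_eq_mul, smul_eq_mul] at h
  linear_combination h

theorem indicatorVec_dotProduct_toBlocks₁₂_mulVec_le {ι : Type*} [Fintype ι] [DecidableEq ι]
    [Nonempty ι] {G : SimpleGraph (ι ⊕ ι)} [DecidableRel G.Adj]
    (hL : ∀ a a', ¬ G.Adj (.inl a) (.inl a')) (hR : ∀ b b', ¬ G.Adj (.inr b) (.inr b'))
    {d : ℕ} (hreg : G.IsRegularOfDegree d) {c : ℝ} (hc₀ : 0 ≤ c)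
    (hc : c ∈ upperBounds (rayleighQuotientsOrthOnes (G.adjMatrix ℝ))) {S T : Finset ι} {σ τ : ℝ}
    (hS : (#S : ℝ) = σ * Fintype.card ι) (hT : (#T : ℝ) = τ * Fintype.card ι) :
    S.indicatorVec ⬝ᵥ (G.adjMatrix ℝ).toBlocks₁₂ *ᵥ T.indicatorVec ≤
      (σ * τ * d + c * (√(σ * τ) - σ * τ)) * Fintype.card ι := by
  have hN : (0 : ℝ) ≤ Fintype.card ι := Nat.cast_nonneg _
  obtain ⟨hrow, hcol⟩ := toBlocks₁₂_mulVec_one_of_bipartite (R := ℝ) hL hR hreg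
  have hp := S.indicatorVec_sub_smul_one_dotProduct_one hS
  have hq := T.indicatorVec_sub_smul_one_dotProduct_one hT
  have hcentered := dotProduct_toBlocks₁₂_mulVec_le_of_bipartite hL hR hc₀ hc hp hq
  rw [sub_smul_one_dotProduct_mulVec_sub_smul_one hrow hcol hp hq,
    S.indicatorVec_sub_smul_one_dotProduct_self hS, T.indicatorVec_sub_smul_one_dotProduct_self hT,
    mul_mul_mul_comm, ← sq, Real.sqrt_mul' _ (sq_nonneg _), Real.sqrt_sq hN] at hcentered
  obtain ⟨hσ₀, hσ₁⟩ := S.mem_Icc_of_card_eq_mul_card hS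
  obtain ⟨hτ₀, hτ₁⟩ := T.mem_Icc_of_card_eq_mul_card hT
  have hsqrt := mul_le_mul_of_nonneg_left (sqrt_mul_one_sub_mul_le hσ₀ hσ₁ hτ₀ hτ₁)
    (mul_nonneg hc₀ hN)
  linear_combination hcentered + hsqrt

end SimpleGraph

theorem stmt_1_general (n Δ : ℕ) (hn : 1 < n)
    (G : SimpleGraph (Fin n ⊕ Fin n)) [DecidableRel G.Adj]
    (hbipL : ∀ a b : Fin n, ¬ G.Adj (Sum.inl a) (Sum.inl b))
    (hbipR : ∀ a b : Fin n, ¬ G.Adj (Sum.inr a) (Sum.inr b))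
    (hreg : ∀ v, G.degree v = Δ)
    (γ : ℝ)
    (hγ : IsGreatest {ρ : ℝ | ∃ x : (Fin n ⊕ Fin n) → ℝ, x ≠ 0 ∧
        (x ⬝ᵥ (fun _ => 1)) = 0 ∧
        x ⬝ᵥ ((G.adjMatrix ℝ).mulVec x) = ρ * (x ⬝ᵥ x)} (γ * Δ))
    (S T : Finset (Fin n)) (σ τ : ℝ)
    (hσ : (S.card : ℝ) = σ * n) (hτ : (T.card : ℝ) = τ * n)
    (U : Finset (Fin n ⊕ Fin n)) (hU : U = S.image Sum.inl ∪ T.image Sum.inr) :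
    (∑ w ∈ U, ((U.filter (fun v => G.Adj w v)).card : ℝ))
      ≤ 2 * ((1 - γ) * σ * τ + γ * Real.sqrt (σ * τ)) * Δ * n := by
  have : Nontrivial (Fin n) := Fin.nontrivial_iff_two_le.2 hn
  have hγΔ : γ * Δ ∈ upperBounds (rayleighQuotientsOrthOnes (G.adjMatrix ℝ)) := hγ.2
  have hS : (#S : ℝ) = σ * Fintype.card (Fin n) := by simpa using hσ
  have hT : (#T : ℝ) = τ * Fintype.card (Fin n) := by simpa using hτ
  have hbound := G.indicatorVec_dotProduct_toBlocks₁₂_mulVec_le hbipL hbipR hreg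
    (G.nonneg_of_mem_upperBounds_of_bipartite hbipL hbipR hγΔ) hγΔ hS hT
  rw [Fintype.card_fin] at hbound
  rw [hU, G.sum_card_filter_adj_eq_indicatorVec_dotProduct, indicatorVec_image_inl_union_image_inr,
    G.sumElim_dotProduct_adjMatrix_mulVec_of_bipartite hbipL hbipR]
  linear_combination 2 * hbound

/-- Degree-sum bound for induced subgraphs of bipartite expanders.
`G` is a bipartite `Δ`-regular connected graph on parts `V' = Fin n` (via `Sum.inl`) and
`V'' = Fin n` (via `Sum.inr`), `n > 1`; `γ * Δ` is the second largest eigenvalue of the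
adjacency matrix (Courant–Fischer characterization over the orthogonal complement of the
all-one vector).  For `S ⊆ V'` and `T ⊆ V''` with `|S| = σn`, `|T| = τn`, `σ + τ > 0`,
the sum of the degrees in the subgraph induced by `S ∪ T` is at most
`2((1−γ)στ + γ√(στ))Δn`. -/
theorem stmt_1 (n Δ : ℕ) (hn : 1 < n) (hΔ : 0 < Δ)
    (G : SimpleGraph (Fin n ⊕ Fin n)) [DecidableRel G.Adj]
    (hbipL : ∀ a b : Fin n, ¬ G.Adj (Sum.inl a) (Sum.inl b))
    (hbipR : ∀ a b : Fin n, ¬ G.Adj (Sum.inr a) (Sum.inr b))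
    (hreg : ∀ v, G.degree v = Δ)
    (hconn : G.Connected)
    (γ : ℝ)
    (hγ : IsGreatest {ρ : ℝ | ∃ x : (Fin n ⊕ Fin n) → ℝ, x ≠ 0 ∧
        (x ⬝ᵥ (fun _ => 1)) = 0 ∧
        x ⬝ᵥ ((G.adjMatrix ℝ).mulVec x) = ρ * (x ⬝ᵥ x)} (γ * Δ))
    (S T : Finset (Fin n)) (σ τ : ℝ)
    (hσ : (S.card : ℝ) = σ * n) (hτ : (T.card : ℝ) = τ * n)
    (hστ : 0 < σ + τ)
    (U : Finset (Fin n ⊕ Fin n)) (hU : U = S.image Sum.inl ∪ T.image Sum.inr) :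
    (∑ w ∈ U, ((U.filter (fun v => G.Adj w v)).card : ℝ))
      ≤ 2 * ((1 - γ) * σ * τ + γ * Real.sqrt (σ * τ)) * Δ * n :=
  stmt_1_general n Δ hn G hbipL hbipR hreg γ hγ S T σ τ hσ hτ U hU
end

section
/- Let G = (V' : V'', E) be a bipartite Δ-regular connected graph with parts of equal size n > 1 whose second-eigenvalue ratio γ = γ_G satisfies γ > 0. Let χ : V' ∪ V'' → [0,1] be a function whose restriction to V'' is not identically zero, and set σ = (1/n) Σ_{u ∈ V'} χ(u) and τ = (1/n) Σ_{v ∈ V''} χ(v). Suppose δ is a real number such that for every v ∈ V'', if χ(v) > 0 then Σ_{u ∈ N(v)} χ(u) ≥ δΔ/2. Then √(σ/τ) ≥ ((δ/2) − (1−γ)σ) / γ. -/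
/-!
Write `f = χ - σ` on `V'` and `g = χ - τ` on `V''`; both sums vanish, so `x = f + t g` is
orthogonal to the all-one vector for every `t`, and the Rayleigh bound gives
`xᵀAx ≤ γΔ ‖x‖²`. Bipartiteness kills `fᵀAf` and `gᵀAg`, so this reads
`2t gᵀAf ≤ γΔ (‖f‖² + t² ‖g‖²)` for all `t`, and the discriminant of this quadratic
yields `gᵀAf ≤ γΔ ‖f‖ ‖g‖ ≤ γΔ n √(σ(1-σ)τ(1-τ)) ≤ γΔ n (√(στ) - στ)`.
On the other hand, regularity and double counting give
`gᵀAf = Σ_{v ∈ V''} χ(v) Σ_{u ∈ N(v)} χ(u) - nΔστ ≥ nΔτ(δ/2 - σ)`.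
Comparing the two bounds and dividing by `nΔτ` gives the claim.
-/

open Matrix BigOperators

open Finset Sum

theorem le_mul_sqrt_of_forall_two_mul_le_s3 {c k P Q : ℝ} (hk : 0 ≤ k)
    (h : ∀ t : ℝ, 2 * t * c ≤ k * (P + t ^ 2 * Q)) : c ≤ k * √(P * Q) := by
  have hdisc : discrim (k * Q) (-2 * c) (k * P) ≤ 0 :=
    discrim_le_zero fun t => by nlinarith [h t]
  rw [discrim] at hdisc
  calc c ≤ |c| := le_abs_self c
    _ = √(c ^ 2) := (Real.sqrt_sq_eq_abs c).symm
    _ ≤ √(k ^ 2 * (P * Q)) := Real.sqrt_le_sqrt (by linarith)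
    _ = k * √(P * Q) := by rw [Real.sqrt_mul (sq_nonneg k), Real.sqrt_sq hk]

theorem sqrt_mul_mul_one_sub_le {N σ τ : ℝ} (hN : 0 ≤ N) (hσ : σ ∈ Set.Icc (0 : ℝ) 1)
    (hτ : τ ∈ Set.Icc (0 : ℝ) 1) :
    √(N * (σ * (1 - σ)) * (N * (τ * (1 - τ)))) ≤ N * (√(σ * τ) - σ * τ) := by
  obtain ⟨hσ0, hσ1⟩ := hσ
  obtain ⟨hτ0, hτ1⟩ := hτ
  set u := √(σ * τ)
  have hu : u ^ 2 = σ * τ := Real.sq_sqrt (mul_nonneg hσ0 hτ0)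
  have hu_le : 2 * u ≤ σ + τ := by
    have : u = √σ * √τ := Real.sqrt_mul hσ0 τ
    nlinarith [sq_nonneg (√σ - √τ), Real.sq_sqrt hσ0, Real.sq_sqrt hτ0]
  have hu1 : u ≤ 1 := by nlinarith
  have hu0 : 0 ≤ u := Real.sqrt_nonneg _
  rw [Real.sqrt_le_iff, ← hu]
  constructor
  · exact mul_nonneg hN (by nlinarith)
  · have : σ * (1 - σ) * (τ * (1 - τ)) ≤ (u - u ^ 2) ^ 2 := by nlinarith [mul_nonneg hσ0 hτ0]
    nlinarith [mul_le_mul_of_nonneg_left this (sq_nonneg N)]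

theorem div_le_sqrt_div_of_mul_sub_le {γ σ τ c : ℝ} (hγ : 0 < γ) (hτ : 0 < τ)
    (h : τ * (c - σ) ≤ γ * (√(σ * τ) - σ * τ)) : (c - (1 - γ) * σ) / γ ≤ √(σ / τ) := by
  have hστ : √(σ * τ) = τ * √(σ / τ) := by
    rw [show σ * τ = τ ^ 2 * (σ / τ) by field_simp, Real.sqrt_mul (sq_nonneg τ),
      Real.sqrt_sq hτ.le]
  rw [hστ, show γ * (τ * √(σ / τ) - σ * τ) = τ * (γ * (√(σ / τ) - σ)) by ring] at h
  rw [div_le_iff₀ hγ]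
  linarith [le_of_mul_le_mul_left h hτ]

theorem sum_sq_sub_le_of_mem_Icc {ι : Type*} [Fintype ι] {f : ι → ℝ} {m : ℝ}
    (hf : ∀ i, f i ∈ Set.Icc (0 : ℝ) 1) (hm : ∑ i, f i = Fintype.card ι * m) :
    ∑ i, (f i - m) ^ 2 ≤ Fintype.card ι * (m * (1 - m)) := by
  calc ∑ i, (f i - m) ^ 2 ≤ ∑ i, (f i * (1 - 2 * m) + m ^ 2) :=
        sum_le_sum fun i _ => by
          nlinarith [mul_nonneg (hf i).1 (sub_nonneg.2 (hf i).2)]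
    _ = Fintype.card ι * (m * (1 - m)) := by
        rw [sum_add_distrib, ← sum_mul, hm, sum_const, card_univ, nsmul_eq_mul]; ring

theorem mem_Icc_of_sum_eq_card_mul {ι : Type*} [Fintype ι] {f : ι → ℝ} {m : ℝ}
    (hf : ∀ i, f i ∈ Set.Icc (0 : ℝ) 1) (hm : ∑ i, f i = Fintype.card ι * m)
    (hι : 0 < Fintype.card ι) : m ∈ Set.Icc (0 : ℝ) 1 := by
  have h0 : 0 ≤ ∑ i, f i := sum_nonneg fun i _ => (hf i).1
  have h1 : ∑ i, f i ≤ Fintype.card ι := by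
    simpa using sum_le_sum fun i (_ : i ∈ univ) => (hf i).2
  have hι' : (0 : ℝ) < Fintype.card ι := by exact_mod_cast hι
  constructor <;> nlinarith

theorem mul_sum_le_sum_mul_of_pos_imp_le {ι : Type*} (s : Finset ι) {w y : ι → ℝ} {c : ℝ}
    (hw : ∀ i ∈ s, 0 ≤ w i) (hy : ∀ i ∈ s, 0 < w i → c ≤ y i) :
    c * ∑ i ∈ s, w i ≤ ∑ i ∈ s, w i * y i := by
  rw [mul_sum]
  refine sum_le_sum fun i hi => ?_
  rcases (hw i hi).eq_or_lt with h | h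
  · simp [← h]
  · rw [mul_comm]
    exact mul_le_mul_of_nonneg_left (hy i hi h) h.le

namespace Matrix

theorem dotProduct_mulVec_le_of_mem_upperBounds_s3 {ι : Type*} [Fintype ι] {M : Matrix ι ι ℝ}
    {r : ℝ} (h : r ∈ upperBounds {ρ : ℝ | ∃ x : ι → ℝ, x ≠ 0 ∧
      (x ⬝ᵥ (fun _ => 1)) = 0 ∧ x ⬝ᵥ (M *ᵥ x) = ρ * (x ⬝ᵥ x)})
    {x : ι → ℝ} (hx : x ⬝ᵥ (fun _ => 1) = 0) :
    x ⬝ᵥ (M *ᵥ x) ≤ r * (x ⬝ᵥ x) := by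
  rcases eq_or_ne x 0 with rfl | hx0
  · simp
  have hpos : 0 < x ⬝ᵥ x :=
    lt_of_le_of_ne (Fintype.sum_nonneg fun i => mul_self_nonneg (x i))
      (Ne.symm (dotProduct_self_eq_zero.not.2 hx0))
  have := h ⟨x, hx0, hx, (div_mul_cancel₀ _ hpos.ne').symm⟩
  rwa [div_le_iff₀ hpos] at this

end Matrix

namespace SimpleGraph

theorem dotProduct_adjMatrix_mulVec_comm {V : Type*} [Fintype V] (G : SimpleGraph V)
    [DecidableRel G.Adj] (x y : V → ℝ) :
    x ⬝ᵥ (G.adjMatrix ℝ *ᵥ y) = y ⬝ᵥ (G.adjMatrix ℝ *ᵥ x) := by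
  rw [dotProduct_mulVec, ← mulVec_transpose, transpose_adjMatrix, dotProduct_comm]

section Bipartite

variable {α β : Type*} [Fintype α] [Fintype β] {G : SimpleGraph (α ⊕ β)}
  [DecidableRel G.Adj]

theorem adjMatrix_mulVec_inl (hL : ∀ a a', ¬ G.Adj (inl a) (inl a')) (x : α ⊕ β → ℝ)
    (a : α) :
    (G.adjMatrix ℝ *ᵥ x) (inl a) = ∑ b, G.adjMatrix ℝ (inl a) (inr b) * x (inr b) := by
  rw [mulVec, dotProduct, Fintype.sum_sum_type]
  simp [adjMatrix_apply, hL]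

theorem adjMatrix_mulVec_inr (hR : ∀ b b', ¬ G.Adj (inr b) (inr b')) (x : α ⊕ β → ℝ)
    (b : β) :
    (G.adjMatrix ℝ *ᵥ x) (inr b) = ∑ a, G.adjMatrix ℝ (inr b) (inl a) * x (inl a) := by
  rw [mulVec, dotProduct, Fintype.sum_sum_type]
  simp [adjMatrix_apply, hR]

theorem sum_adjMatrix_mulVec_inr (hL : ∀ a a', ¬ G.Adj (inl a) (inl a'))
    (hR : ∀ b b', ¬ G.Adj (inr b) (inr b')) (x : α ⊕ β → ℝ) :
    ∑ b, (G.adjMatrix ℝ *ᵥ x) (inr b) = ∑ a, G.degree (inl a) * x (inl a) := by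
  have hdeg (a : α) : ∑ b, G.adjMatrix ℝ (inl a) (inr b) = G.degree (inl a) := by
    simpa using (adjMatrix_mulVec_inl hL (fun _ => 1) a).symm
  simp_rw [adjMatrix_mulVec_inr hR, ← hdeg, sum_mul]
  rw [sum_comm]
  simp_rw [G.isSymm_adjMatrix.apply]

theorem dotProduct_adjMatrix_mulVec_centered (hL : ∀ a a', ¬ G.Adj (inl a) (inl a'))
    (hR : ∀ b b', ¬ G.Adj (inr b) (inr b')) {Δ : ℕ} (hreg : G.IsRegularOfDegree Δ)
    (χ : α ⊕ β → ℝ) {σ τ : ℝ} (hσ : ∑ a, χ (inl a) = Fintype.card α * σ)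
    (hτ : ∑ b, χ (inr b) = Fintype.card β * τ) :
    Sum.elim (0 : α → ℝ) (fun b => χ (inr b) - τ) ⬝ᵥ
        (G.adjMatrix ℝ *ᵥ Sum.elim (fun a => χ (inl a) - σ) (0 : β → ℝ)) =
      ∑ b, χ (inr b) * (G.adjMatrix ℝ *ᵥ χ) (inr b) - Fintype.card α * Δ * σ * τ := by
  have hrow (b : β) :
      (G.adjMatrix ℝ *ᵥ Sum.elim (fun a => χ (inl a) - σ) (0 : β → ℝ)) (inr b) =
        (G.adjMatrix ℝ *ᵥ χ) (inr b) - Δ * σ := by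
    have hdeg : ∑ a, G.adjMatrix ℝ (inr b) (inl a) = Δ := by
      simpa [hreg (inr b)] using (adjMatrix_mulVec_inr hR (fun _ => 1) b).symm
    simp only [adjMatrix_mulVec_inr hR, Sum.elim_inl, mul_sub, sum_sub_distrib, ← sum_mul, hdeg]
  have hhand : ∑ b, (G.adjMatrix ℝ *ᵥ χ) (inr b) = Δ * (Fintype.card α * σ) := by
    simp only [sum_adjMatrix_mulVec_inr hL hR, hreg (inl _), ← mul_sum, hσ]
  simp only [dotProduct, Fintype.sum_sum_type, Sum.elim_inl, Sum.elim_inr, Pi.zero_apply,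
    zero_mul, sum_const_zero, zero_add, hrow]
  simp only [sub_mul, mul_sub, sum_sub_distrib, ← mul_sum, ← sum_mul, hhand, hτ, sum_const,
    card_univ, nsmul_eq_mul]
  ring

theorem dotProduct_adjMatrix_mulVec_le_mul_sqrt (hL : ∀ a a', ¬ G.Adj (inl a) (inl a'))
    (hR : ∀ b b', ¬ G.Adj (inr b) (inr b')) {k : ℝ} (hk0 : 0 ≤ k)
    (hk : ∀ x : α ⊕ β → ℝ, x ⬝ᵥ (fun _ => 1) = 0 →
      x ⬝ᵥ (G.adjMatrix ℝ *ᵥ x) ≤ k * (x ⬝ᵥ x))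
    {f : α → ℝ} {g : β → ℝ} (hf : ∑ a, f a = 0) (hg : ∑ b, g b = 0) :
    Sum.elim 0 g ⬝ᵥ (G.adjMatrix ℝ *ᵥ Sum.elim f 0) ≤
      k * √((f ⬝ᵥ f) * (g ⬝ᵥ g)) := by
  refine le_mul_sqrt_of_forall_two_mul_le_s3 hk0 fun t => ?_
  set p : α ⊕ β → ℝ := Sum.elim f 0
  set q : α ⊕ β → ℝ := Sum.elim 0 g
  have hpp : p ⬝ᵥ (G.adjMatrix ℝ *ᵥ p) = 0 := by
    simp [p, dotProduct, Fintype.sum_sum_type, -adjMatrix_mulVec_apply,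
      adjMatrix_mulVec_inl hL]
  have hqq : q ⬝ᵥ (G.adjMatrix ℝ *ᵥ q) = 0 := by
    simp [q, dotProduct, Fintype.sum_sum_type, -adjMatrix_mulVec_apply,
      adjMatrix_mulVec_inr hR]
  have hxAx : (p + t • q) ⬝ᵥ (G.adjMatrix ℝ *ᵥ (p + t • q)) =
      2 * t * (q ⬝ᵥ (G.adjMatrix ℝ *ᵥ p)) := by
    simp only [mulVec_add, mulVec_smul, dotProduct_add, add_dotProduct, dotProduct_smul,
      smul_dotProduct, hpp, hqq, G.dotProduct_adjMatrix_mulVec_comm p, smul_eq_mul]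
    ring
  have hxx : (p + t • q) ⬝ᵥ (p + t • q) = f ⬝ᵥ f + t ^ 2 * (g ⬝ᵥ g) := by
    simp only [dotProduct, Pi.add_apply, Pi.smul_apply, smul_eq_mul, Fintype.sum_sum_type,
      elim_inl, Pi.zero_apply, mul_zero, add_zero, elim_inr, zero_add, mul_sum, add_right_inj, p, q]
    exact sum_congr rfl fun b _ => by ring
  rw [← hxAx, ← hxx]
  exact hk _ (by simp [p, q, dotProduct, Fintype.sum_sum_type, hf, ← mul_sum, hg])

theorem sum_mul_adjMatrix_mulVec_inr_sub_le (hL : ∀ a a', ¬ G.Adj (inl a) (inl a'))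
    (hR : ∀ b b', ¬ G.Adj (inr b) (inr b')) {Δ : ℕ} (hreg : G.IsRegularOfDegree Δ) {k : ℝ}
    (hk0 : 0 ≤ k)
    (hk : ∀ x : α ⊕ β → ℝ, x ⬝ᵥ (fun _ => 1) = 0 →
      x ⬝ᵥ (G.adjMatrix ℝ *ᵥ x) ≤ k * (x ⬝ᵥ x))
    {χ : α ⊕ β → ℝ} (hχ : ∀ v, χ v ∈ Set.Icc (0 : ℝ) 1) {σ τ : ℝ}
    (hσ : ∑ a, χ (inl a) = Fintype.card α * σ)
    (hτ : ∑ b, χ (inr b) = Fintype.card β * τ) :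
    ∑ b, χ (inr b) * (G.adjMatrix ℝ *ᵥ χ) (inr b) - Fintype.card α * Δ * σ * τ ≤
      k * √(Fintype.card α * (σ * (1 - σ)) * (Fintype.card β * (τ * (1 - τ)))) := by
  rw [← dotProduct_adjMatrix_mulVec_centered hL hR hreg χ hσ hτ]
  refine (dotProduct_adjMatrix_mulVec_le_mul_sqrt hL hR hk0 hk
    (by simp [sum_sub_distrib, hσ]) (by simp [sum_sub_distrib, hτ])).trans ?_
  have hvarL := sum_sq_sub_le_of_mem_Icc (fun a => hχ (inl a)) hσ
  have hvarR := sum_sq_sub_le_of_mem_Icc (fun b => hχ (inr b)) hτ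
  simp only [dotProduct, ← sq]
  gcongr
  exact hvarL.trans' (sum_nonneg fun a _ => sq_nonneg _)

end Bipartite

end SimpleGraph

theorem stmt_3_general (n Δ : ℕ) (hΔ : 0 < Δ)
    (G : SimpleGraph (Fin n ⊕ Fin n)) [DecidableRel G.Adj]
    (hbipL : ∀ a b : Fin n, ¬ G.Adj (Sum.inl a) (Sum.inl b))
    (hbipR : ∀ a b : Fin n, ¬ G.Adj (Sum.inr a) (Sum.inr b))
    (hreg : ∀ v, G.degree v = Δ)
    (γ : ℝ) (hγpos : 0 < γ)
    (hγ : IsGreatest {ρ : ℝ | ∃ x : (Fin n ⊕ Fin n) → ℝ, x ≠ 0 ∧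
        (x ⬝ᵥ (fun _ => 1)) = 0 ∧
        x ⬝ᵥ ((G.adjMatrix ℝ).mulVec x) = ρ * (x ⬝ᵥ x)} (γ * Δ))
    (χ : (Fin n ⊕ Fin n) → ℝ)
    (hχ : ∀ v, χ v ∈ Set.Icc (0 : ℝ) 1)
    (hχne : ∃ v : Fin n, χ (Sum.inr v) ≠ 0)
    (σ τ : ℝ)
    (hσ : σ = (1 / (n : ℝ)) * ∑ u : Fin n, χ (Sum.inl u))
    (hτ : τ = (1 / (n : ℝ)) * ∑ v : Fin n, χ (Sum.inr v))
    (δ : ℝ)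
    (hδ : ∀ v : Fin n, 0 < χ (Sum.inr v) →
        δ * Δ / 2 ≤ ∑ u ∈ G.neighborFinset (Sum.inr v), χ u) :
    (δ / 2 - (1 - γ) * σ) / γ ≤ Real.sqrt (σ / τ) := by
  obtain ⟨v₀, hv₀⟩ := hχne
  have hn : (0 : ℝ) < n := by exact_mod_cast v₀.pos
  have hσn : ∑ a, χ (inl a) = Fintype.card (Fin n) * σ := by
    rw [hσ, Fintype.card_fin]; field_simp
  have hτn : ∑ b, χ (inr b) = Fintype.card (Fin n) * τ := by
    rw [hτ, Fintype.card_fin]; field_simp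
  have hσ01 := mem_Icc_of_sum_eq_card_mul (fun a => hχ (inl a)) hσn (by simpa using v₀.pos)
  have hτ01 := mem_Icc_of_sum_eq_card_mul (fun b => hχ (inr b)) hτn (by simpa using v₀.pos)
  have hτ0 : 0 < τ := by
    have := sum_pos' (fun b _ => (hχ (inr b)).1) ⟨v₀, mem_univ _, (hχ _).1.lt_of_ne' hv₀⟩
    rw [hτn, Fintype.card_fin] at this
    exact pos_of_mul_pos_right this hn.le
  have hmix := SimpleGraph.sum_mul_adjMatrix_mulVec_inr_sub_le hbipL hbipR hreg
    (by positivity) (fun x hx => dotProduct_mulVec_le_of_mem_upperBounds_s3 hγ.2 hx) hχ hσn hτn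
  have hlower := mul_sum_le_sum_mul_of_pos_imp_le univ (fun b _ => (hχ (inr b)).1)
    (y := fun b => (G.adjMatrix ℝ *ᵥ χ) (inr b)) (fun b _ hb => by simpa using hδ b hb)
  rw [hτn] at hlower
  simp only [Fintype.card_fin] at hlower hmix
  have hkey : τ * (δ / 2 - σ) ≤ γ * (√(σ * τ) - σ * τ) := by
    refine le_of_mul_le_mul_left ?_ (mul_pos hn (by exact_mod_cast hΔ : (0 : ℝ) < Δ))
    linarith [mul_le_mul_of_nonneg_left (sqrt_mul_mul_one_sub_le hn.le hσ01 hτ01)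
      (by positivity : (0 : ℝ) ≤ γ * Δ)]
  exact div_le_sqrt_div_of_mul_sub_le hγpos hτ0 hkey

/-- Lemma bounding `√(σ/τ)` for the iterative decoder analysis.
`G` is a bipartite `Δ`-regular connected graph on parts `V' = Fin n` (via `Sum.inl`) and
`V'' = Fin n` (via `Sum.inr`), `n > 1`, with second-eigenvalue ratio `γ > 0` (the
second largest eigenvalue `γ * Δ` of the adjacency matrix is characterized via the
greatest Rayleigh quotient over nonzero vectors orthogonal to the all-one vector).
If `χ : V' ∪ V'' → [0,1]` is not identically zero on `V''` and every `v ∈ V''` with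
`χ(v) > 0` satisfies `Σ_{u ∈ N(v)} χ(u) ≥ δΔ/2`, then `√(σ/τ) ≥ ((δ/2) − (1−γ)σ)/γ`. -/
theorem stmt_3 (n Δ : ℕ) (hn : 1 < n) (hΔ : 0 < Δ)
    (G : SimpleGraph (Fin n ⊕ Fin n)) [DecidableRel G.Adj]
    (hbipL : ∀ a b : Fin n, ¬ G.Adj (Sum.inl a) (Sum.inl b))
    (hbipR : ∀ a b : Fin n, ¬ G.Adj (Sum.inr a) (Sum.inr b))
    (hreg : ∀ v, G.degree v = Δ)
    (hconn : G.Connected)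
    (γ : ℝ) (hγpos : 0 < γ)
    (hγ : IsGreatest {ρ : ℝ | ∃ x : (Fin n ⊕ Fin n) → ℝ, x ≠ 0 ∧
        (x ⬝ᵥ (fun _ => 1)) = 0 ∧
        x ⬝ᵥ ((G.adjMatrix ℝ).mulVec x) = ρ * (x ⬝ᵥ x)} (γ * Δ))
    (χ : (Fin n ⊕ Fin n) → ℝ)
    (hχ : ∀ v, χ v ∈ Set.Icc (0 : ℝ) 1)
    (hχne : ∃ v : Fin n, χ (Sum.inr v) ≠ 0)
    (σ τ : ℝ)
    (hσ : σ = (1 / (n : ℝ)) * ∑ u : Fin n, χ (Sum.inl u))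
    (hτ : τ = (1 / (n : ℝ)) * ∑ v : Fin n, χ (Sum.inr v))
    (δ : ℝ)
    (hδ : ∀ v : Fin n, 0 < χ (Sum.inr v) →
        δ * Δ / 2 ≤ ∑ u ∈ G.neighborFinset (Sum.inr v), χ u) :
    (δ / 2 - (1 - γ) * σ) / γ ≤ Real.sqrt (σ / τ) :=
  stmt_3_general n Δ hΔ G hbipL hbipR hreg γ hγpos hγ χ hχ hχne σ τ hσ hτ δ hδ
end

section
/- Let θ, δ > 0, let 0 ≤ γ < 1, and let σ, τ ∈ (0,1] satisfy max{θσ, δτ} ≤ (1−γ)στ + γ√(στ). Then σ ≥ (δ − γ·√(δ/θ)) / (1 − γ). (If σ/τ ≤ δ/θ this follows from the inequality δτ ≤ (1−γ)στ + γ√(στ); if σ/τ > δ/θ it follows by symmetry, via τ ≥ (θ − γ√(θ/δ))/(1−γ) and σ > (δ/θ)·τ.) -/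
/-!
Dividing `δτ ≤ (1-γ)στ + γ√(στ)` by `τ` gives `δ ≤ (1-γ)σ + γ√(σ/τ)`, which is the bound as soon as
`σ/τ ≤ δ/θ`. Otherwise the same argument with the roles of `(θ, σ)` and `(δ, τ)` exchanged bounds
`(1-γ)τ` below by `θ - γ√(θ/δ)`, and multiplying by `δ/θ < σ/τ` gives the bound on `σ`.
-/

namespace Real

theorem sqrt_mul_le_sqrt_mul_of_le_mul {a b r : ℝ} (hb : 0 ≤ b) (hab : a ≤ r * b) :
    √(a * b) ≤ √r * b :=
  calc √(a * b) ≤ √(r * b * b) := sqrt_le_sqrt (mul_le_mul_of_nonneg_right hab hb)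
    _ = √r * b := by rw [mul_assoc, sqrt_mul' r (mul_nonneg hb hb), sqrt_mul_self hb]

theorem le_one_sub_mul_add_mul_sqrt_of_le_mul {a b d r γ : ℝ} (hb : 0 < b) (hγ : 0 ≤ γ)
    (hab : a ≤ r * b) (h : d * b ≤ (1 - γ) * a * b + γ * √(a * b)) :
    d ≤ (1 - γ) * a + γ * √r := by
  refine le_of_mul_le_mul_right ?_ hb
  calc d * b ≤ (1 - γ) * a * b + γ * √(a * b) := h
    _ ≤ (1 - γ) * a * b + γ * (√r * b) := by
      gcongr; exact sqrt_mul_le_sqrt_mul_of_le_mul hb.le hab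
    _ = ((1 - γ) * a + γ * √r) * b := by ring

end Real

open Real in
theorem stmt_8_general (θ δ γ σ τ : ℝ) (hθ : 0 < θ) (hδ : 0 < δ)
    (hγ0 : 0 ≤ γ) (hγ1 : γ < 1)
    (hσ0 : 0 < σ) (hτ0 : 0 < τ)
    (h : max (θ * σ) (δ * τ) ≤ (1 - γ) * σ * τ + γ * Real.sqrt (σ * τ)) :
    (δ - γ * Real.sqrt (δ / θ)) / (1 - γ) ≤ σ := by
  obtain ⟨hθσ, hδτ⟩ := max_le_iff.mp h
  rw [div_le_iff₀ (sub_pos.mpr hγ1), sub_le_iff_le_add, mul_comm σ]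
  rcases le_or_gt σ (δ / θ * τ) with hσ | hσ
  · exact le_one_sub_mul_add_mul_sqrt_of_le_mul hτ0 hγ0 hσ hδτ
  · have hτ : τ ≤ θ / δ * σ := by
      rw [div_mul_eq_mul_div, le_div_iff₀ hδ]
      rw [div_mul_eq_mul_div, div_lt_iff₀ hθ] at hσ
      linarith
    have hθτ : θ ≤ (1 - γ) * τ + γ * √(θ / δ) :=
      le_one_sub_mul_add_mul_sqrt_of_le_mul hσ0 hγ0 hτ
        (by rwa [mul_right_comm, mul_comm σ τ] at hθσ)
    calc δ = δ / θ * θ := (div_mul_cancel₀ δ hθ.ne').symm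
      _ ≤ δ / θ * ((1 - γ) * τ + γ * √(θ / δ)) := by gcongr
      _ = (1 - γ) * (δ / θ * τ) + γ * (δ / θ * √(δ / θ)⁻¹) := by rw [inv_div]; ring
      _ ≤ (1 - γ) * σ + γ * √(δ / θ) := by
        rw [sqrt_inv, ← div_eq_mul_inv, div_sqrt]
        gcongr

/-- Arithmetic core of the minimum-distance bound. -/
theorem stmt_8 (θ δ γ σ τ : ℝ) (hθ : 0 < θ) (hδ : 0 < δ)
    (hγ0 : 0 ≤ γ) (hγ1 : γ < 1)
    (hσ0 : 0 < σ) (hσ1 : σ ≤ 1) (hτ0 : 0 < τ) (hτ1 : τ ≤ 1)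
    (h : max (θ * σ) (δ * τ) ≤ (1 - γ) * σ * τ + γ * Real.sqrt (σ * τ)) :
    (δ - γ * Real.sqrt (δ / θ)) / (1 - γ) ≤ σ :=
  stmt_8_general θ δ γ σ τ hθ hδ hγ0 hγ1 hσ0 hτ0 h
end

section
/- Let θ, δ, γ, σ be positive reals with γ < 1 and √(θδ) > 2γ, set β = ((δ/2) − γ·√(δ/θ)) / (1 − γ), and let (σ_i)_{i≥1} be a sequence of positive reals with σ_1 ≤ σ < β such that for every i ≥ 2: √(σ_{i−1}/σ_i) ≥ δ/(2γ) − ((1−γ)/γ)·σ_{i−1} when i is even, and √(σ_{i−1}/σ_i) ≥ θ/(2γ) − ((1−γ)/γ)·σ_{i−1} when i is odd. Then for every i ≥ 2: σ_{i−1}/σ_i ≥ δ/θ when i is even, and σ_{i−1}/σ_i ≥ θ/δ when i is odd; in particular σ_{i−2} ≥ σ_i for all i > 2, so σ_i ≤ σ for odd i and σ_i ≤ σ_2 for even i. -/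
/-!
Write `T(c, d) = (c/2 - γ√(c/d))/(1 - γ)`, so that `β = T(δ, θ)`. If `σ_{i-1} < T(c, d)`, the
hypothesis at step `i` (with `c` the distance used at that step) forces `√(σ_{i-1}/σ_i) > √(c/d)`,
i.e. `σ_i < σ_{i-1} · d/c < T(c, d) · d/c = T(d, c)`. Since the decoder alternates between the
two codes, the roles of `δ` and `θ` swap at every step, and induction from `σ_1 < β` keeps every
`σ_i` below its threshold. Two consecutive ratios multiply to at least `(δ/θ)(θ/δ) = 1`, which
gives `σ_i ≤ σ_{i-2}`.
-/

open Real

noncomputable def contractionThreshold (γ c d : ℝ) : ℝ :=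
  (c / 2 - γ * √(c / d)) / (1 - γ)

section ContractionThreshold

variable {γ c d : ℝ}

lemma contractionThreshold_mul_div (hc : c ≠ 0) :
    contractionThreshold γ c d * (d / c) = contractionThreshold γ d c := by
  have hsqrt : √(c / d) * (d / c) = √(d / c) := by
    rw [← inv_div c d, ← div_eq_mul_inv, sqrt_div_self', one_div, sqrt_inv]
  unfold contractionThreshold
  rw [div_mul_eq_mul_div, sub_mul, mul_assoc, hsqrt]
  field_simp

lemma div_lt_div_of_lt_contractionThreshold (hγ0 : 0 < γ) (hγ1 : γ < 1) {x y : ℝ}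
    (hx : x < contractionThreshold γ c d)
    (h : c / (2 * γ) - (1 - γ) / γ * x ≤ √(x / y)) : c / d < x / y := by
  have hsqrt : √(c / d) < c / (2 * γ) - (1 - γ) / γ * x := by
    have hx' : (1 - γ) * x < c / 2 - γ * √(c / d) := by
      rwa [contractionThreshold, lt_div_iff₀ (by linarith), mul_comm] at hx
    rw [show c / (2 * γ) - (1 - γ) / γ * x = (c / 2 - (1 - γ) * x) / γ by ring,
      lt_div_iff₀ hγ0]
    linarith
  have hlt := hsqrt.trans_le h
  exact (sqrt_lt_sqrt_iff_of_pos (sqrt_pos.mp ((sqrt_nonneg _).trans_lt hlt))).mp hlt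

lemma lt_contractionThreshold_swap (hγ0 : 0 < γ) (hγ1 : γ < 1) (hc : 0 < c) (hd : 0 < d)
    {x y : ℝ} (hy : 0 < y) (hx : x < contractionThreshold γ c d)
    (h : c / (2 * γ) - (1 - γ) / γ * x ≤ √(x / y)) : y < contractionThreshold γ d c := by
  have hratio := div_lt_div_of_lt_contractionThreshold hγ0 hγ1 hx h
  rw [lt_div_iff₀ hy, ← lt_div_iff₀' (div_pos hc hd), div_div_eq_mul_div, mul_div_assoc] at hratio
  rw [← contractionThreshold_mul_div hc.ne']
  exact hratio.trans (mul_lt_mul_of_pos_right hx (div_pos hd hc))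

lemma div_lt_div_of_alternating (hγ0 : 0 < γ) (hγ1 : γ < 1) (hc : 0 < c) (hd : 0 < d)
    {σs : ℕ → ℝ} (hpos : ∀ i, 1 ≤ i → 0 < σs i) (h1 : σs 1 < contractionThreshold γ c d)
    (heven : ∀ k, c / (2 * γ) - (1 - γ) / γ * σs (2 * k + 1) ≤ √(σs (2 * k + 1) / σs (2 * k + 2)))
    (hodd : ∀ k, d / (2 * γ) - (1 - γ) / γ * σs (2 * k + 2) ≤ √(σs (2 * k + 2) / σs (2 * k + 3)))
    (k : ℕ) :
    c / d < σs (2 * k + 1) / σs (2 * k + 2) ∧ d / c < σs (2 * k + 2) / σs (2 * k + 3) := by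
  have hbound : ∀ k, σs (2 * k + 1) < contractionThreshold γ c d ∧
      σs (2 * k + 2) < contractionThreshold γ d c := by
    intro k
    induction k with
    | zero =>
      exact ⟨h1, lt_contractionThreshold_swap hγ0 hγ1 hc hd (hpos 2 one_le_two) h1 (heven 0)⟩
    | succ k ih =>
      have hnext := lt_contractionThreshold_swap hγ0 hγ1 hd hc (hpos _ (by omega)) ih.2 (hodd k)
      refine ⟨hnext, ?_⟩
      exact lt_contractionThreshold_swap hγ0 hγ1 hc hd (hpos _ (by omega)) hnext (heven (k + 1))
  exact ⟨div_lt_div_of_lt_contractionThreshold hγ0 hγ1 (hbound k).1 (heven k),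
    div_lt_div_of_lt_contractionThreshold hγ0 hγ1 (hbound k).2 (hodd k)⟩

end ContractionThreshold

lemma lt_of_lt_div_of_inv_lt_div {r x y z : ℝ} (hr : 0 < r) (hy : 0 < y) (hz : 0 < z)
    (hyz : r < y / z) (hxy : r⁻¹ < x / y) : z < x := by
  rw [lt_div_iff₀ hz] at hyz
  rw [lt_div_iff₀ hy] at hxy
  calc z = r⁻¹ * (r * z) := by field_simp
    _ < r⁻¹ * y := mul_lt_mul_of_pos_left hyz (inv_pos.mpr hr)
    _ < x := hxy

section Parity

variable {P : ℕ → Prop}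

lemma Nat.forall_even_of_forall_two_mul_add_two (h : ∀ k, P (2 * k + 2)) :
    ∀ i, 2 ≤ i → Even i → P i := by
  rintro i hi ⟨k, rfl⟩
  obtain ⟨m, rfl⟩ : ∃ m, k = m + 1 := ⟨k - 1, by omega⟩
  rw [show m + 1 + (m + 1) = 2 * m + 2 by ring]
  exact h m

lemma Nat.forall_odd_of_forall_two_mul_add_three (h : ∀ k, P (2 * k + 3)) :
    ∀ i, 2 ≤ i → Odd i → P i := by
  rintro i hi ⟨k, rfl⟩
  obtain ⟨m, rfl⟩ : ∃ m, k = m + 1 := ⟨k - 1, by omega⟩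
  rw [show 2 * (m + 1) + 1 = 2 * m + 3 by ring]
  exact h m

lemma Nat.forall_gt_two_of_forall_two_mul_add (h3 : ∀ k, P (2 * k + 3))
    (h4 : ∀ k, P (2 * k + 4)) : ∀ i, 2 < i → P i := by
  intro i hi
  obtain ⟨k, rfl | rfl⟩ := Nat.even_or_odd' i
  · obtain ⟨m, rfl⟩ : ∃ m, k = m + 2 := ⟨k - 2, by omega⟩
    rw [show 2 * (m + 2) = 2 * m + 4 by ring]
    exact h4 m
  · obtain ⟨m, rfl⟩ : ∃ m, k = m + 1 := ⟨k - 1, by omega⟩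
    rw [show 2 * (m + 1) + 1 = 2 * m + 3 by ring]
    exact h3 m

end Parity

theorem stmt_14_general (θ δ γ σ β : ℝ) (hθ : 0 < θ) (hδ : 0 < δ) (hγ0 : 0 < γ) (hγ1 : γ < 1)
    (hβ : β = (δ / 2 - γ * Real.sqrt (δ / θ)) / (1 - γ))
    (σs : ℕ → ℝ) (hpos : ∀ i, 1 ≤ i → 0 < σs i)
    (h1 : σs 1 ≤ σ) (hσβ : σ < β)
    (heven : ∀ i, 2 ≤ i → Even i →
        δ / (2 * γ) - (1 - γ) / γ * σs (i - 1) ≤ Real.sqrt (σs (i - 1) / σs i))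
    (hodd : ∀ i, 2 ≤ i → Odd i →
        θ / (2 * γ) - (1 - γ) / γ * σs (i - 1) ≤ Real.sqrt (σs (i - 1) / σs i)) :
    (∀ i, 2 ≤ i → Even i → δ / θ ≤ σs (i - 1) / σs i) ∧
    (∀ i, 2 ≤ i → Odd i → θ / δ ≤ σs (i - 1) / σs i) ∧
    (∀ i, 2 < i → σs i ≤ σs (i - 2)) ∧
    (∀ i, 1 ≤ i → Odd i → σs i ≤ σ) ∧
    (∀ i, 2 ≤ i → Even i → σs i ≤ σs 2) := by
  have hratio := div_lt_div_of_alternating hγ0 hγ1 hδ hθ hpos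
    (by rw [contractionThreshold, ← hβ]; exact h1.trans_lt hσβ)
    (fun k => heven (2 * k + 2) (by omega) ⟨k + 1, by ring⟩)
    (fun k => hodd (2 * k + 3) (by omega) ⟨k + 1, by ring⟩)
  have hodd_le (k : ℕ) : σs (2 * (k + 1) + 1) ≤ σs (2 * k + 1) :=
    (lt_of_lt_div_of_inv_lt_div (div_pos hθ hδ) (hpos _ (by omega)) (hpos _ (by omega))
      (hratio k).2 (by rw [inv_div]; exact (hratio k).1)).le
  have heven_le (k : ℕ) : σs (2 * (k + 1) + 2) ≤ σs (2 * k + 2) :=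
    (lt_of_lt_div_of_inv_lt_div (div_pos hδ hθ) (hpos _ (by omega)) (hpos _ (by omega))
      (hratio (k + 1)).1 (by rw [inv_div]; exact (hratio k).2)).le
  refine ⟨Nat.forall_even_of_forall_two_mul_add_two fun k => (hratio k).1.le,
    Nat.forall_odd_of_forall_two_mul_add_three fun k => (hratio k).2.le,
    Nat.forall_gt_two_of_forall_two_mul_add hodd_le heven_le, ?_,
    Nat.forall_even_of_forall_two_mul_add_two fun k =>
      antitone_nat_of_succ_le (f := fun k => σs (2 * k + 2)) heven_le (Nat.zero_le k)⟩
  rintro i - ⟨k, rfl⟩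
  exact (antitone_nat_of_succ_le (f := fun k => σs (2 * k + 1)) hodd_le (Nat.zero_le k)).trans h1

/-- Inductive contraction claim in the iterative decoder analysis.
`σs i` is the fraction of erroneous vertices after iteration `i` (indices `i ≥ 1`). -/
theorem stmt_14 (θ δ γ σ β : ℝ) (hθ : 0 < θ) (hδ : 0 < δ) (hγ0 : 0 < γ) (hγ1 : γ < 1)
    (hθδγ : Real.sqrt (θ * δ) > 2 * γ)
    (hβ : β = (δ / 2 - γ * Real.sqrt (δ / θ)) / (1 - γ))
    (σs : ℕ → ℝ) (hpos : ∀ i, 1 ≤ i → 0 < σs i)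
    (h1 : σs 1 ≤ σ) (hσβ : σ < β)
    (heven : ∀ i, 2 ≤ i → Even i →
        δ / (2 * γ) - (1 - γ) / γ * σs (i - 1) ≤ Real.sqrt (σs (i - 1) / σs i))
    (hodd : ∀ i, 2 ≤ i → Odd i →
        θ / (2 * γ) - (1 - γ) / γ * σs (i - 1) ≤ Real.sqrt (σs (i - 1) / σs i)) :
    (∀ i, 2 ≤ i → Even i → δ / θ ≤ σs (i - 1) / σs i) ∧
    (∀ i, 2 ≤ i → Odd i → θ / δ ≤ σs (i - 1) / σs i) ∧
    (∀ i, 2 < i → σs i ≤ σs (i - 2)) ∧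
    (∀ i, 1 ≤ i → Odd i → σs i ≤ σ) ∧
    (∀ i, 2 ≤ i → Even i → σs i ≤ σs 2) :=
  stmt_14_general θ δ γ σ β hθ hδ hγ0 hγ1 hβ σs hpos h1 hσβ heven hodd
end

section
/- Let θ, δ, γ, σ be positive reals with γ < 1 and √(θδ) > 2γ, set β = ((δ/2) − γ·√(δ/θ)) / (1 − γ), and suppose σ < β. Let (σ_i)_{i≥1} be a sequence of positive reals with σ_1 ≤ σ such that for every even i ≥ 2: 1/√(σ_{i+1}) ≥ (θδ/(4γ²))·(1/√(σ_{i−1}) − √σ/β) + √σ/β. Then for every even i ≥ 0: 1/√(σ_{i+1}) ≥ ((θδ/(4γ²))^{i/2}·(1 − σ/β) + σ/β) / √σ. In particular, since θδ/(4γ²) > 1, the values σ_{i+1} decrease exponentially in i. -/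
/-! Writing `A = θδ/(4γ²)` and `c = √σ/β`, the hypothesis says that `x_k = 1/√σ_{2k+1}` satisfies
`x_{k+1} ≥ A (x_k - c) + c`. Since `A ≥ 0` the affine map `x ↦ A (x - c) + c` is monotone, so by
induction `x_k ≥ A^k (x_0 - c) + c ≥ A^k (1/√σ - c) + c`, which is the claimed bound rewritten with
`σ/β/√σ = √σ/β`. That `A > 1` is just `√(θδ) > 2γ` squared. -/

theorem pow_mul_sub_add_le_of_le_mul_sub_add {R : Type*} [CommRing R] [PartialOrder R]
    [IsOrderedRing R] {A a c : R} {x : ℕ → R} (hA : 0 ≤ A) (h₀ : a ≤ x 0)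
    (hx : ∀ k, A * (x k - c) + c ≤ x (k + 1)) (k : ℕ) :
    A ^ k * (a - c) + c ≤ x k := by
  induction k with
  | zero => simpa using h₀
  | succ k ih =>
    calc A ^ (k + 1) * (a - c) + c = A * (A ^ k * (a - c) + c - c) + c := by ring
      _ ≤ A * (x k - c) + c := by gcongr
      _ ≤ x (k + 1) := hx k

theorem one_lt_div_four_mul_sq_of_two_mul_lt_sqrt {p γ : ℝ} (hγ : 0 < γ)
    (h : 2 * γ < Real.sqrt p) : 1 < p / (4 * γ ^ 2) := by
  rw [one_lt_div (by positivity)]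
  linarith [(Real.lt_sqrt (by positivity)).mp h]

theorem stmt_15_general (θ δ γ σ β : ℝ) (hγ0 : 0 < γ)
    (hθδγ : Real.sqrt (θ * δ) > 2 * γ)
    (σs : ℕ → ℝ) (hpos : ∀ i, 1 ≤ i → 0 < σs i) (h1 : σs 1 ≤ σ)
    (hrec : ∀ i, 2 ≤ i → Even i →
        θ * δ / (4 * γ ^ 2) * (1 / Real.sqrt (σs (i - 1)) - Real.sqrt σ / β)
            + Real.sqrt σ / β
          ≤ 1 / Real.sqrt (σs (i + 1))) :
    1 < θ * δ / (4 * γ ^ 2) ∧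
    ∀ i : ℕ, Even i →
      ((θ * δ / (4 * γ ^ 2)) ^ (i / 2) * (1 - σ / β) + σ / β) / Real.sqrt σ
        ≤ 1 / Real.sqrt (σs (i + 1)) := by
  have hA := one_lt_div_four_mul_sq_of_two_mul_lt_sqrt hγ0 hθδγ
  refine ⟨hA, ?_⟩
  rintro i ⟨k, rfl⟩
  have h₀ : 1 / Real.sqrt σ ≤ 1 / Real.sqrt (σs (2 * 0 + 1)) :=
    one_div_le_one_div_of_le (Real.sqrt_pos.mpr (hpos 1 le_rfl)) (Real.sqrt_le_sqrt h1)
  have hstep (k : ℕ) := hrec (2 * (k + 1)) (by omega) (even_two_mul _)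
  have bound := pow_mul_sub_add_le_of_le_mul_sub_add
    (x := fun k ↦ 1 / Real.sqrt (σs (2 * k + 1))) (zero_lt_one.trans hA).le h₀
    (fun k ↦ by simpa [Nat.mul_succ] using hstep k) k
  have hc : σ / β / Real.sqrt σ = Real.sqrt σ / β := by rw [div_right_comm, Real.div_sqrt]
  rw [← two_mul, Nat.mul_div_cancel_left k two_pos]
  calc _ = (θ * δ / (4 * γ ^ 2)) ^ k * (1 / Real.sqrt σ - Real.sqrt σ / β)
          + Real.sqrt σ / β := by rw [← hc]; ring
    _ ≤ _ := bound

/-- Solution of the first-order linear recurrence governing the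
fraction of erroneous vertices in the iterative decoder analysis. -/
theorem stmt_15 (θ δ γ σ β : ℝ) (hθ : 0 < θ) (hδ : 0 < δ) (hγ0 : 0 < γ) (hγ1 : γ < 1)
    (hσ : 0 < σ)
    (hθδγ : Real.sqrt (θ * δ) > 2 * γ)
    (hβ : β = (δ / 2 - γ * Real.sqrt (δ / θ)) / (1 - γ))
    (hσβ : σ < β)
    (σs : ℕ → ℝ) (hpos : ∀ i, 1 ≤ i → 0 < σs i) (h1 : σs 1 ≤ σ)
    (hrec : ∀ i, 2 ≤ i → Even i →
        θ * δ / (4 * γ ^ 2) * (1 / Real.sqrt (σs (i - 1)) - Real.sqrt σ / β)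
            + Real.sqrt σ / β
          ≤ 1 / Real.sqrt (σs (i + 1))) :
    1 < θ * δ / (4 * γ ^ 2) ∧
    ∀ i : ℕ, Even i →
      ((θ * δ / (4 * γ ^ 2)) ^ (i / 2) * (1 - σ / β) + σ / β) / Real.sqrt σ
        ≤ 1 / Real.sqrt (σs (i + 1)) :=
  stmt_15_general θ δ γ σ β hγ0 hθδγ σs hpos h1 hrec
end

section
/- There exists a constant c > 0 such that for every designed rate R ∈ (0,1] and every sufficiently small ε > 0 there is an infinite family of codes (i.e., codes of infinitely many lengths n) over an alphabet Φ of size at most 2^{c·(log(1/ε))/ε³}, each of rate at least R − ε (equivalently, rate at least the designed value R after adjusting ε) and relative minimum distance greater than 1 − R − ε. In particular, these codes approach the Singleton bound as ε → 0, over an alphabet of size 2^{O((log(1/ε))/ε³)}. -/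
/-!
The codes are obtained by the Gilbert–Varshamov greedy argument over the alphabet of size
`q = 2 ^ ⌈1/ε⌉`. A maximal code `C ⊆ Φⁿ` with pairwise distances `> r` covers `Φⁿ` by Hamming balls
of radius `r`, each of size at most `2ⁿ qʳ`, so `qⁿ ≤ |C| 2ⁿ qʳ` and the rate is at least
`1 - log_q 2 - r/n ≥ 1 - ε - r/n`. Taking `r = ⌊(1 - R - ε) n⌋` gives both bounds for every `n`,
and `q ≤ 2 ^ (log(1/ε)/ε³)` once `ε < 1/3`.
-/

open Finset

section HammingBall

variable {ι α : Type*} [Fintype ι] [DecidableEq ι] [Fintype α]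

lemma card_piFinset_ite_univ_singleton (c : ι → α) (S : Finset ι) :
    #(Fintype.piFinset fun i => if i ∈ S then (univ : Finset α) else {c i}) =
      Fintype.card α ^ #S := by
  simp only [Fintype.card_piFinset, apply_ite card, card_univ, card_singleton]
  rw [prod_ite_mem, univ_inter, prod_const]

lemma card_hammingBall_le [DecidableEq α] [Nonempty α] (c : ι → α) (r : ℕ) :
    #{x | hammingDist x c ≤ r} ≤ 2 ^ Fintype.card ι * Fintype.card α ^ r := by
  have hcover : ({x | hammingDist x c ≤ r} : Finset (ι → α)) ⊆
      ({S | #S ≤ r} : Finset (Finset ι)).biUnion fun S =>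
        Fintype.piFinset fun i => if i ∈ S then univ else {c i} := by
    intro x hx
    simp only [mem_filter, mem_univ, true_and] at hx
    refine mem_biUnion.mpr ⟨({i | x i ≠ c i} : Finset ι), by simpa [hammingDist] using hx, ?_⟩
    simp only [Fintype.mem_piFinset]
    intro i
    by_cases h : x i = c i <;> simp [h]
  calc #{x | hammingDist x c ≤ r}
      ≤ ∑ S ∈ ({S | #S ≤ r} : Finset (Finset ι)), Fintype.card α ^ #S := by
        refine (card_le_card hcover).trans (card_biUnion_le.trans_eq ?_)
        exact sum_congr rfl fun S _ => card_piFinset_ite_univ_singleton c S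
    _ ≤ ∑ _S ∈ ({S | #S ≤ r} : Finset (Finset ι)), Fintype.card α ^ r :=
        sum_le_sum fun S hS => Nat.pow_le_pow_right Fintype.card_pos (mem_filter.mp hS).2
    _ ≤ 2 ^ Fintype.card ι * Fintype.card α ^ r := by
        rw [sum_const, smul_eq_mul]
        gcongr
        exact (card_filter_le _ _).trans_eq (by simp)

lemma exists_covering_code [DecidableEq α] [Nonempty α] (r : ℕ) :
    ∃ C : Finset (ι → α), C.Nonempty ∧ (C : Set (ι → α)).Pairwise (r < hammingDist · ·) ∧
      ∀ x, ∃ c ∈ C, hammingDist x c ≤ r := by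
  set codes : Finset (Finset (ι → α)) := {C | (C : Set (ι → α)).Pairwise (r < hammingDist · ·)}
  have hsingleton : {Classical.arbitrary (ι → α)} ∈ codes := by simp [codes]
  obtain ⟨C, hC, hmax⟩ := exists_max_image codes card ⟨_, hsingleton⟩
  have hCcode := (mem_filter.mp hC).2
  refine ⟨C, card_pos.mp (lt_of_lt_of_le one_pos (by simpa using hmax _ hsingleton)), hCcode, ?_⟩
  by_contra! ⟨x, hx⟩
  have hxC : x ∉ C := fun hx' => by simpa using hx x hx'
  have hins : insert x C ∈ codes := by
    simp only [codes, mem_filter, mem_univ, true_and, coe_insert]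
    refine Set.pairwise_insert.mpr ⟨hCcode, fun c hc _ => ⟨hx c hc, ?_⟩⟩
    rw [hammingDist_comm]
    exact hx c hc
  have := hmax _ hins
  rw [card_insert_of_notMem hxC] at this
  omega

lemma exists_code_card_mul_ge [DecidableEq α] [Nonempty α] (r : ℕ) :
    ∃ C : Finset (ι → α), C.Nonempty ∧ (C : Set (ι → α)).Pairwise (r < hammingDist · ·) ∧
      Fintype.card α ^ Fintype.card ι ≤ #C * (2 ^ Fintype.card ι * Fintype.card α ^ r) := by
  obtain ⟨C, hCne, hCcode, hcover⟩ := exists_covering_code (ι := ι) (α := α) r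
  refine ⟨C, hCne, hCcode, ?_⟩
  calc Fintype.card α ^ Fintype.card ι = #(univ : Finset (ι → α)) := by simp
    _ ≤ #(C.biUnion fun c => {x | hammingDist x c ≤ r}) :=
        card_le_card fun x _ => by simpa using hcover x
    _ ≤ ∑ c ∈ C, #{x | hammingDist x c ≤ r} := card_biUnion_le
    _ ≤ #C * (2 ^ Fintype.card ι * Fintype.card α ^ r) := by
        simpa using sum_le_sum fun (c : ι → α) _ => card_hammingBall_le c r

end HammingBall

open Real

lemma logb_card_ge_of_pow_le {q n r N : ℕ} (hq : 2 ≤ q) (h : q ^ n ≤ N * (2 ^ n * q ^ r)) :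
    n * (1 - logb q 2) - r ≤ logb q N := by
  have hq1 : (1 : ℝ) < q := by exact_mod_cast hq
  have hN : (0 : ℝ) < N := by
    have : 0 < N * (2 ^ n * q ^ r) := lt_of_lt_of_le (by positivity) h
    exact_mod_cast pos_of_mul_pos_left this (by positivity)
  have hlog : logb q ((q : ℝ) ^ n) ≤ logb q (N * (2 ^ n * (q : ℝ) ^ r)) :=
    logb_le_logb_of_le hq1 (by positivity) (by exact_mod_cast h)
  rw [logb_mul hN.ne' (by positivity), logb_mul (by positivity) (by positivity),
    logb_pow, logb_pow, logb_pow, logb_self_eq_one hq1] at hlog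
  linarith

lemma exists_code_rate_ge_dist_gt {q n : ℕ} {R ε : ℝ} (hq : 2 ≤ q) (hqε : logb q 2 ≤ ε)
    (hR : R ≤ 1) (hn : 0 < n) :
    ∃ C : Finset (Fin n → Fin q), C.Nonempty ∧ R - ε ≤ logb q #C / n ∧
      ∀ x ∈ C, ∀ y ∈ C, x ≠ y → (1 - R - ε) * n < (hammingDist x y : ℝ) := by
  have : NeZero q := ⟨by omega⟩
  set r := ⌊(1 - R - ε) * n⌋₊
  obtain ⟨C, hCne, hCcode, hCcard⟩ := exists_code_card_mul_ge (ι := Fin n) (α := Fin q) r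
  simp only [Fintype.card_fin] at hCcard
  refine ⟨C, hCne, ?_, fun x hx y hy hxy => ?_⟩
  · have hnR : (0 : ℝ) < n := by exact_mod_cast hn
    have hε : 0 ≤ ε := (logb_nonneg (by exact_mod_cast hq) one_le_two).trans hqε
    have hr : (r : ℝ) ≤ (1 - R) * n := by
      rcases le_total 0 ((1 - R - ε) * n) with h | h
      · nlinarith [Nat.floor_le h]
      · simp only [r, Nat.floor_of_nonpos h, Nat.cast_zero]
        nlinarith
    rw [le_div_iff₀ hnR]
    nlinarith [logb_card_ge_of_pow_le hq hCcard]
  · calc (1 - R - ε) * n < r + 1 := Nat.lt_floor_add_one _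
      _ ≤ hammingDist x y := by exact_mod_cast hCcode hx hy hxy

lemma logb_two_pow_ceil_inv_le {ε : ℝ} (hε : 0 < ε) :
    logb ((2 ^ ⌈1 / ε⌉₊ : ℕ) : ℝ) 2 ≤ ε := by
  have hm : 1 / ε ≤ ⌈1 / ε⌉₊ := Nat.le_ceil _
  have hmpos : (0 : ℝ) < ⌈1 / ε⌉₊ := (by positivity : (0 : ℝ) < 1 / ε).trans_le hm
  rw [Nat.cast_pow, Nat.cast_ofNat, logb, log_pow, div_mul_cancel_right₀ (log_pos one_lt_two).ne']
  rw [inv_le_comm₀ hmpos hε]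
  simpa using hm

lemma two_pow_ceil_inv_le {ε : ℝ} (hε : 0 < ε) (hε' : ε < 1 / 3) :
    ((2 ^ ⌈1 / ε⌉₊ : ℕ) : ℝ) ≤ 2 ^ (log (1 / ε) / ε ^ 3) := by
  have hinv : 3 < 1 / ε := by rw [lt_div_iff₀ hε]; linarith
  have hlog : 1 ≤ log (1 / ε) := by
    rw [le_log_iff_exp_le (by positivity)]
    linarith [exp_one_lt_d9]
  have hm : (⌈1 / ε⌉₊ : ℝ) ≤ 1 / ε ^ 3 := by
    have h2 : 2 / ε ≤ 1 / ε ^ 3 := by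
      have hsq : ε ^ 2 ≤ 1 / 2 := by nlinarith
      rw [div_le_div_iff₀ hε (by positivity)]
      nlinarith
    linarith [Nat.ceil_lt_add_one (by positivity : (0 : ℝ) ≤ 1 / ε), (by ring : 2 / ε = 1 / ε + 1 / ε)]
  calc ((2 ^ ⌈1 / ε⌉₊ : ℕ) : ℝ) = 2 ^ (⌈1 / ε⌉₊ : ℝ) := by simp
    _ ≤ 2 ^ (log (1 / ε) / ε ^ 3) :=
        rpow_le_rpow_of_exponent_le one_le_two
          (hm.trans (div_le_div_of_nonneg_right hlog (by positivity)))

/-- Nearly-MDS codes over an alphabet of size `2^{O((log(1/ε))/ε³)}`.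
There is a constant `c > 0` such that for every designed rate `R ∈ (0,1]` and every
sufficiently small `ε > 0` there is an alphabet `Φ = Fin q` of size at most
`2^{c·(log(1/ε))/ε³}` and an infinite family of (nonempty) codes over `Φ` — i.e. codes of
infinitely many lengths `n` — each of rate `log_q |C| / n` at least `R − ε` and relative
minimum distance greater than `1 − R − ε`. -/
theorem stmt_17 :
    ∃ c : ℝ, 0 < c ∧
      ∀ R : ℝ, 0 < R → R ≤ 1 →
        ∃ ε₀ : ℝ, 0 < ε₀ ∧
          ∀ ε : ℝ, 0 < ε → ε < ε₀ →
            ∃ q : ℕ, 2 ≤ q ∧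
              (q : ℝ) ≤ 2 ^ (c * Real.log (1 / ε) / ε ^ 3) ∧
              {n : ℕ | 0 < n ∧
                ∃ C : Finset (Fin n → Fin q), C.Nonempty ∧
                  R - ε ≤ Real.logb q C.card / n ∧
                  ∀ x ∈ C, ∀ y ∈ C, x ≠ y →
                    (1 - R - ε) * n < (hammingDist x y : ℝ)}.Infinite := by
  refine ⟨1, one_pos, fun R _ hR => ⟨1 / 3, by norm_num, fun ε hε hε' => ?_⟩⟩
  have hq : 2 ≤ 2 ^ ⌈1 / ε⌉₊ := Nat.le_self_pow (Nat.ceil_pos.mpr (by positivity)).ne' 2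
  refine ⟨2 ^ ⌈1 / ε⌉₊, hq, by simpa using two_pow_ceil_inv_le hε hε', ?_⟩
  exact (Set.Ioi_infinite 0).mono fun n hn =>
    ⟨hn, exists_code_rate_ge_dist_gt hq (logb_two_pow_ceil_inv_le hε) hR hn⟩
end
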